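/- arXiv:1909.05389 — 3 statements merged into one kernel-verified Lean document; each statement's English description precedes it below -/
import Mathlib

section
/- Let d ≥ 2, let E ⊆ [1,2] be nonempty, and suppose the maximal operator M_E f(x) = sup_{t∈E} |A_t f(x)| (where A_t f(x) = ∫_{S^{d-1}} f(x - t y) dσ(y), σ normalized surface measure) satisfies ‖M_E f‖_{L^q(ℝ^d)} ≤ C ‖f‖_{L^p(ℝ^d)} for all continuous compactly supported f. Then d/q ≥ 1/p. -/
open MeasureTheory Metric

/-- Spherical average: mean of `f` over the sphere of radius `t` centered at `x`,
with respect to the normalized surface measure (normalized `(d-1)`-dimensional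
Hausdorff measure on the unit sphere). -/
noncomputable def sphAvg (d : ℕ) (f : EuclideanSpace ℝ (Fin d) → ℝ) (t : ℝ)
    (x : EuclideanSpace ℝ (Fin d)) : ℝ :=
  ⨍ y in sphere (0 : EuclideanSpace ℝ (Fin d)) 1, f (x - t • y) ∂(μH[(d : ℝ) - 1])

/-- Maximal operator associated to the dilation set `E`. -/
noncomputable def maxOp (d : ℕ) (E : Set ℝ) (f : EuclideanSpace ℝ (Fin d) → ℝ)
    (x : EuclideanSpace ℝ (Fin d)) : ℝ :=
  ⨆ t : E, |sphAvg d f t x|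

open Module
open scoped ENNReal NNReal

set_option linter.unnecessarySeqFocus false

local notation "ES" n => EuclideanSpace ℝ (Fin n)

lemma haar_hausdorff (n : ℕ) :
    Measure.IsAddHaarMeasure (μH[(n:ℝ)] : Measure (ES n)) := by
  have := MeasureTheory.isAddHaarMeasure_hausdorffMeasure (E := ES n)
  rwa [finrank_euclideanSpace_fin] at this

lemma sphere_hausdorff_pos (n : ℕ) :
    0 < μH[(n:ℝ)] (sphere (0 : ES (n+1)) 1) := by
  have hHaar := haar_hausdorff n
  -- projection
  set L : (ES (n+1)) → (ES n) := fun x => WithLp.toLp 2 (fun (i : Fin n) => x i.castSucc) with hL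
  have hLip : LipschitzWith 1 L := by
    refine LipschitzWith.of_dist_le_mul fun x y => ?_
    simp only [NNReal.coe_one, one_mul]
    rw [EuclideanSpace.dist_eq, EuclideanSpace.dist_eq]
    apply Real.sqrt_le_sqrt
    rw [Fin.sum_univ_castSucc]
    exact le_add_of_nonneg_right (by positivity)
  have himg : closedBall (0 : ES n) 1 ⊆ L '' (sphere (0 : ES (n+1)) 1) := by
    intro x hx
    rw [mem_closedBall, dist_zero_right] at hx
    have hx2 : ∑ i, x i ^ 2 = ‖x‖ ^ 2 := by
      rw [EuclideanSpace.norm_eq]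
      simp only [Real.norm_eq_abs, sq_abs]
      rw [Real.sq_sqrt (by positivity)]
    refine ⟨WithLp.toLp 2 (Fin.snoc x (Real.sqrt (1 - ‖x‖^2)) : Fin (n+1) → ℝ), ?_, ?_⟩
    · rw [mem_sphere_zero_iff_norm, EuclideanSpace.norm_eq]
      simp only [Real.norm_eq_abs, sq_abs]
      rw [Fin.sum_univ_castSucc]
      simp only [PiLp.toLp_apply, Fin.snoc_castSucc, Fin.snoc_last]
      rw [hx2, Real.sq_sqrt (by nlinarith [norm_nonneg x])]
      rw [show ‖x‖^2 + (1 - ‖x‖^2) = 1 by ring, Real.sqrt_one]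
    · ext i
      simp [hL, Fin.snoc_castSucc]
  have h1 := hLip.hausdorffMeasure_image_le (d := (n:ℝ)) (by positivity)
      (sphere (0 : ES (n+1)) 1)
  have h2 : μH[(n:ℝ)] (closedBall (0 : ES n) 1) ≤
      μH[(n:ℝ)] (L '' (sphere (0 : ES (n+1)) 1)) := measure_mono himg
  have h3 : 0 < μH[(n:ℝ)] (closedBall (0 : ES n) 1) := by
    have := hHaar.toIsOpenPosMeasure
    exact lt_of_lt_of_le (measure_ball_pos _ 0 one_pos) (measure_mono ball_subset_closedBall)
  calc (0:ℝ≥0∞) < μH[(n:ℝ)] (closedBall (0 : ES n) 1) := h3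
    _ ≤ μH[(n:ℝ)] (L '' (sphere (0 : ES (n+1)) 1)) := h2
    _ ≤ (1:ℝ≥0) ^ (n:ℝ) * μH[(n:ℝ)] (sphere (0 : ES (n+1)) 1) := h1
    _ = μH[(n:ℝ)] (sphere (0 : ES (n+1)) 1) := by simp

lemma sum_sq_eq_normsq (m : ℕ) (x : EuclideanSpace ℝ (Fin m)) :
    ∑ i, x i ^ 2 = ‖x‖ ^ 2 := by
  rw [EuclideanSpace.norm_eq]
  simp only [Real.norm_eq_abs, sq_abs]
  rw [Real.sq_sqrt (by positivity)]

lemma sqrt_lip {η u v : ℝ} (hη : 0 < η) (hu : η ≤ u) (hv : η ≤ v) :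
    |Real.sqrt u - Real.sqrt v| ≤ |u - v| / (2 * Real.sqrt η) := by
  have h1 : Real.sqrt η ≤ Real.sqrt u := Real.sqrt_le_sqrt hu
  have h2 : Real.sqrt η ≤ Real.sqrt v := Real.sqrt_le_sqrt hv
  have h3 : 0 < Real.sqrt η := Real.sqrt_pos.2 hη
  have key : (Real.sqrt u - Real.sqrt v) * (Real.sqrt u + Real.sqrt v) = u - v := by
    have := Real.sq_sqrt (hη.le.trans hu)
    have := Real.sq_sqrt (hη.le.trans hv)
    nlinarith
  have h5 : |Real.sqrt u - Real.sqrt v| * (Real.sqrt u + Real.sqrt v) = |u - v| := by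
    rw [← key, abs_mul,
      abs_of_pos (show (0:ℝ) < Real.sqrt u + Real.sqrt v by nlinarith)]
  rw [le_div_iff₀ (by positivity)]
  calc |Real.sqrt u - Real.sqrt v| * (2 * Real.sqrt η)
      ≤ |Real.sqrt u - Real.sqrt v| * (Real.sqrt u + Real.sqrt v) := by
        apply mul_le_mul_of_nonneg_left (by linarith) (abs_nonneg _)
    _ = |u - v| := h5

set_option maxHeartbeats 1000000 in
lemma sphere_hausdorff_lt_top (n : ℕ) :
    μH[(n:ℝ)] (sphere (0 : ES (n+1)) 1) < ⊤ := by
  have hHaar := haar_hausdorff n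
  set η : ℝ := 1 / (n+1) with hη
  have hηpos : 0 < η := by positivity
  set A : Set (ES n) := {x | ‖x‖^2 ≤ 1 - η} with hA
  set K : ℝ≥0 := ⟨Real.sqrt (1 + 1/η), by positivity⟩ with hK
  set g : Fin (n+1) → Bool → (ES n) → (ES (n+1)) := fun i σ x =>
    WithLp.toLp 2 (Fin.insertNth i ((if σ then 1 else -1) * Real.sqrt (1 - ‖x‖^2)) x : Fin (n+1) → ℝ)
    with hg
  -- covering
  have hcov : sphere (0 : ES (n+1)) 1 ⊆ ⋃ i, ⋃ σ, g i σ '' A := by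
    intro y hy
    rw [mem_sphere_zero_iff_norm] at hy
    have hysq : ∑ j, y j ^ 2 = 1 := by
      rw [sum_sq_eq_normsq (n+1) y, hy, one_pow]
    have hex : ∃ i, η ≤ y i ^ 2 := by
      by_contra hco
      push_neg at hco
      have h1 : ∑ j, y j ^ 2 < ∑ _j : Fin (n+1), η :=
        Finset.sum_lt_sum_of_nonempty Finset.univ_nonempty (fun j _ => hco j)
      rw [hysq, Finset.sum_const, Finset.card_univ, Fintype.card_fin, nsmul_eq_mul,
        hη, mul_one_div] at h1
      push_cast at h1
      rw [div_self (by positivity : ((n:ℝ)+1) ≠ 0)] at h1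
      exact lt_irrefl _ h1
    obtain ⟨i, hi⟩ := hex
    set x : ES n := WithLp.toLp 2 (Fin.removeNth i y : Fin n → ℝ) with hx
    have hxsq : ‖x‖^2 = 1 - y i ^ 2 := by
      rw [← sum_sq_eq_normsq n x]
      have h2 := Fin.sum_univ_succAbove (fun j => y j ^ 2) i
      rw [h2] at hysq
      have hxj : ∀ j, x j = y (i.succAbove j) := fun j => rfl
      simp only [hxj]
      linarith
    refine Set.mem_iUnion.2 ⟨i, Set.mem_iUnion.2 ⟨decide (0 ≤ y i), ⟨x, ?_, ?_⟩⟩⟩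
    · rw [hA, Set.mem_setOf_eq, hxsq]; linarith
    · rw [hg]
      have hsqrt : Real.sqrt (1 - ‖x‖^2) = |y i| := by
        rw [hxsq, show (1:ℝ) - (1 - y i ^2) = y i ^2 by ring, Real.sqrt_sq_eq_abs]
      simp only [hsqrt]
      have hsgn : (if decide (0 ≤ y i) then (1:ℝ) else -1) * |y i| = y i := by
        rcases le_or_gt 0 (y i) with h | h
        · simp [h, abs_of_nonneg h]
        · simp [not_le.2 h, abs_of_neg h]
      rw [hsgn]
      exact congrArg (WithLp.toLp 2) (Fin.insertNth_self_removeNth i y)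
  -- Lipschitz on A
  have hlip : ∀ i σ, LipschitzOnWith K (g i σ) A := by
    intro i σ
    rw [lipschitzOnWith_iff_dist_le_mul]
    intro x hx y hy
    rw [hA, Set.mem_setOf_eq] at hx hy
    have hx1 : ‖x‖ ≤ 1 := by nlinarith [norm_nonneg x, hηpos]
    have hy1 : ‖y‖ ≤ 1 := by nlinarith [norm_nonneg y, hηpos]
    have hux : η ≤ 1 - ‖x‖^2 := by linarith
    have huy : η ≤ 1 - ‖y‖^2 := by linarith
    have hd2 : dist x y ^ 2 = ∑ j, (x j - y j)^2 := by
      rw [EuclideanSpace.dist_eq, Real.sq_sqrt (by positivity)]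
      simp [Real.dist_eq, sq_abs]
    have hgd : dist (g i σ x) (g i σ y) ^ 2 =
        ((if σ then (1:ℝ) else -1) * Real.sqrt (1 - ‖x‖^2)
          - (if σ then (1:ℝ) else -1) * Real.sqrt (1 - ‖y‖^2)) ^ 2
        + ∑ j, (x j - y j)^2 := by
      rw [EuclideanSpace.dist_eq, Real.sq_sqrt (by positivity)]
      simp only [Real.dist_eq, sq_abs]
      rw [Fin.sum_univ_succAbove (fun j => (g i σ x j - g i σ y j)^2) i]
      simp [hg, Fin.insertNth_apply_same, Fin.insertNth_apply_succAbove]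
    have hsq : ((if σ then (1:ℝ) else -1) * Real.sqrt (1 - ‖x‖^2)
          - (if σ then (1:ℝ) else -1) * Real.sqrt (1 - ‖y‖^2)) ^ 2
        = (Real.sqrt (1 - ‖x‖^2) - Real.sqrt (1 - ‖y‖^2)) ^ 2 := by
      rcases σ with _ | _ <;> simp <;> ring
    have hslip := sqrt_lip hηpos hux huy
    have habs : |(1 - ‖x‖^2) - (1 - ‖y‖^2)| ≤ 2 * dist x y := by
      have h1 : |(1 - ‖x‖^2) - (1 - ‖y‖^2)| = |‖x‖ + ‖y‖| * |‖y‖ - ‖x‖| := by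
        rw [← abs_mul]; congr 1; ring
      have h2 : |‖y‖ - ‖x‖| ≤ dist x y := by
        calc |‖y‖ - ‖x‖| ≤ ‖y - x‖ := abs_norm_sub_norm_le y x
          _ = dist x y := by rw [← dist_eq_norm, dist_comm]
      have h3 : |‖x‖ + ‖y‖| ≤ 2 := by
        rw [abs_of_nonneg (by positivity)]; linarith
      rw [h1]
      exact mul_le_mul h3 h2 (abs_nonneg _) (by norm_num)
    have hsd : |Real.sqrt (1 - ‖x‖^2) - Real.sqrt (1 - ‖y‖^2)|
        ≤ dist x y / Real.sqrt η := by
      have h4 : |(1 - ‖x‖^2) - (1 - ‖y‖^2)| / (2 * Real.sqrt η)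
          ≤ (2 * dist x y) / (2 * Real.sqrt η) := by gcongr
      have h5 : (2 * dist x y) / (2 * Real.sqrt η) = dist x y / Real.sqrt η := by
        rw [mul_div_mul_left _ _ (by norm_num : (2:ℝ) ≠ 0)]
      linarith [hslip]
    have hfinal : dist (g i σ x) (g i σ y) ^ 2 ≤ (1 + 1/η) * dist x y ^ 2 := by
      rw [hgd, hsq]
      have h5 : (Real.sqrt (1 - ‖x‖^2) - Real.sqrt (1 - ‖y‖^2))^2
          ≤ (dist x y / Real.sqrt η)^2 := by
        rw [← sq_abs]
        exact pow_le_pow_left₀ (abs_nonneg _) hsd 2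
      have h6 : (dist x y / Real.sqrt η)^2 = dist x y ^2 / η := by
        rw [div_pow, Real.sq_sqrt hηpos.le]
      rw [← hd2]
      rw [h6] at h5
      have h7 : dist x y ^2 / η = (1/η) * dist x y ^2 := by ring
      nlinarith [dist_nonneg (x := x) (y := y)]
    have h8 : dist (g i σ x) (g i σ y) ≤ Real.sqrt (1 + 1/η) * dist x y := by
      calc dist (g i σ x) (g i σ y)
          = Real.sqrt (dist (g i σ x) (g i σ y) ^ 2) := (Real.sqrt_sq dist_nonneg).symm
        _ ≤ Real.sqrt ((1 + 1/η) * dist x y ^ 2) := Real.sqrt_le_sqrt hfinal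
        _ = Real.sqrt (1 + 1/η) * dist x y := by
            rw [Real.sqrt_mul (by positivity), Real.sqrt_sq dist_nonneg]
    calc dist (g i σ x) (g i σ y) ≤ Real.sqrt (1 + 1/η) * dist x y := h8
      _ = (K : ℝ) * dist x y := rfl
  -- conclude
  have hAball : A ⊆ closedBall (0 : ES n) 1 := by
    intro x hx
    rw [mem_closedBall, dist_zero_right]
    rw [hA, Set.mem_setOf_eq] at hx
    nlinarith [norm_nonneg x, hηpos]
  have hAfin : μH[(n:ℝ)] A < ⊤ := by
    refine lt_of_le_of_lt (measure_mono hAball) ?_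
    exact (isCompact_closedBall _ _).measure_lt_top
  calc μH[(n:ℝ)] (sphere (0 : ES (n+1)) 1)
      ≤ ∑' (i : Fin (n+1)), μH[(n:ℝ)] (⋃ σ, g i σ '' A) :=
        (measure_mono hcov).trans (measure_iUnion_le _)
    _ ≤ ∑' (i : Fin (n+1)), ∑' (σ : Bool), μH[(n:ℝ)] (g i σ '' A) :=
        ENNReal.tsum_le_tsum fun i => measure_iUnion_le _
    _ < ⊤ := by
        rw [tsum_fintype]
        refine ENNReal.sum_lt_top.2 fun i _ => ?_
        rw [tsum_fintype]
        refine ENNReal.sum_lt_top.2 fun σ _ => ?_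
        refine lt_of_le_of_lt ((hlip i σ).hausdorffMeasure_image_le (by positivity)) ?_
        exact ENNReal.mul_lt_top
          (ENNReal.rpow_lt_top_of_nonneg (by positivity) ENNReal.coe_ne_top) hAfin

lemma pow_sub_pow_le_aux (m : ℕ) {a b : ℝ} (hb : 0 ≤ b) (hba : b ≤ a) (ha : a ≤ 3) :
    a ^ m - b ^ m ≤ m * 3 ^ m * (a - b) := by
  induction m with
  | zero => simp
  | succ k ih =>
    have hbk : b ^ k ≤ 3 ^ k := pow_le_pow_left₀ hb (by linarith) k
    have hak : (0:ℝ) ≤ a ^ k := pow_nonneg (hb.trans hba) k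
    have h3k : (0:ℝ) < 3 ^ k := by positivity
    have key : a ^ (k+1) - b ^ (k+1) = a * (a ^ k - b ^ k) + (a - b) * b ^ k := by ring
    have h1 : a * (a ^ k - b ^ k) ≤ 3 * (k * 3 ^ k * (a - b)) := by
      have hsub : (0:ℝ) ≤ a ^ k - b ^ k := by
        have := pow_le_pow_left₀ hb hba k; linarith
      nlinarith [ih]
    have h2 : (a - b) * b ^ k ≤ (a - b) * 3 ^ k :=
      mul_le_mul_of_nonneg_left hbk (by linarith)
    have h3 : (0:ℝ) ≤ 3 ^ k * (a - b) := mul_nonneg h3k.le (by linarith)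
    have hID : ((k:ℝ)+1) * 3 ^ (k+1) * (a - b)
        = 3 * ((k:ℝ) * 3 ^ k * (a - b)) + 3 * (3 ^ k * (a - b)) := by ring
    push_cast
    nlinarith [h1, h2, h3, hID, key]

lemma rpow_exponent_le {A B α β : ℝ} (hA : 0 < A)
    (h : ∀ δ : ℝ, 0 < δ → δ ≤ 1/2 → A * δ ^ α ≤ B * δ ^ β) : β ≤ α := by
  by_contra hc
  push_neg at hc
  set e : ℝ := β - α with he
  have hepos : 0 < e := by simp [he]; linarith
  have hBpos : 0 < |B| + 1 := by positivity
  set M : ℝ := A / (2 * (|B| + 1)) with hM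
  have hMpos : 0 < M := by positivity
  set δ : ℝ := min (1/2) (M ^ (1/e)) with hδ
  have hδpos : 0 < δ := lt_min (by norm_num) (Real.rpow_pos_of_pos hMpos _)
  have hδle : δ ≤ 1/2 := min_le_left _ _
  have hkey := h δ hδpos hδle
  -- δ^β = δ^α * δ^e
  have hsplit : δ ^ β = δ ^ α * δ ^ e := by
    rw [← Real.rpow_add hδpos]; congr 1; simp [he]
  have hδα : 0 < δ ^ α := Real.rpow_pos_of_pos hδpos _
  have hAB : A ≤ B * δ ^ e := by
    rw [hsplit, ← mul_assoc] at hkey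
    nlinarith [hδα, hkey]
  have hδe : δ ^ e ≤ M := by
    have h1 : δ ≤ M ^ (1/e) := min_le_right _ _
    have h2 : δ ^ e ≤ (M ^ (1/e)) ^ e :=
      Real.rpow_le_rpow hδpos.le h1 hepos.le
    rwa [← Real.rpow_mul hMpos.le, one_div,
      inv_mul_cancel₀ hepos.ne', Real.rpow_one] at h2
  have hδenn : 0 < δ ^ e := Real.rpow_pos_of_pos hδpos _
  have : B * δ ^ e ≤ |B| * M := by
    calc B * δ ^ e ≤ |B| * δ ^ e := by
          apply mul_le_mul_of_nonneg_right (le_abs_self B) hδenn.le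
      _ ≤ |B| * M := mul_le_mul_of_nonneg_left hδe (abs_nonneg B)
  have hlt : |B| * M < A := by
    rw [hM]
    calc |B| * (A / (2 * (|B| + 1))) < (|B| + 1) * (A / (2 * (|B| + 1))) := by
          apply mul_lt_mul_of_pos_right (by linarith) (by positivity)
      _ = A / 2 := by field_simp
      _ < A := by linarith
  linarith

theorem necessary_condition_Q1_Q4 (d : ℕ) (hd : 2 ≤ d) (E : Set ℝ)
    (hE : E ⊆ Set.Icc (1:ℝ) 2) (hEne : E.Nonempty)
    (p q : ℝ) (hp : 1 ≤ p) (hq : 1 ≤ q) (C : ℝ)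
    (hbound : ∀ f : EuclideanSpace ℝ (Fin d) → ℝ,
      Continuous f → HasCompactSupport f →
      eLpNorm (maxOp d E f) (ENNReal.ofReal q) volume
        ≤ ENNReal.ofReal C * eLpNorm f (ENNReal.ofReal p) volume) :
    1 / p ≤ (d : ℝ) / q := by
  obtain ⟨n, rfl⟩ : ∃ n, d = n + 1 := ⟨d - 1, by omega⟩
  set D : ℕ := n + 1 with hD
  obtain ⟨t0, ht0E⟩ := hEne
  obtain ⟨ht01, ht02⟩ := hE ht0E
  have hp0 : 0 < p := by linarith
  have hq0 : 0 < q := by linarith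
  have ht0pos : (0:ℝ) < t0 := by linarith
  -- measure of the sphere
  have hμcast : (μH[((D:ℕ):ℝ) - 1] : Measure (EuclideanSpace ℝ (Fin D)))
      = μH[(n:ℝ)] := by
    rw [show (((D:ℕ)):ℝ) - 1 = (n:ℝ) by rw [hD]; push_cast; ring]
  set μs : ℝ≥0∞ := μH[(n:ℝ)] (sphere (0 : EuclideanSpace ℝ (Fin D)) 1) with hμs
  have hμpos : 0 < μs := sphere_hausdorff_pos n
  have hμfin : μs < ⊤ := sphere_hausdorff_lt_top n
  have hμtR : 0 < μs.toReal := ENNReal.toReal_pos hμpos.ne' hμfin.ne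
  -- rewrite of sphAvg
  have havg : ∀ (g : EuclideanSpace ℝ (Fin D) → ℝ) (t : ℝ) (x : EuclideanSpace ℝ (Fin D)),
      sphAvg D g t x = (μs.toReal)⁻¹ *
        ∫ y in sphere (0 : EuclideanSpace ℝ (Fin D)) 1, g (x - t • y) ∂μH[(n:ℝ)] := by
    intro g t x
    rw [sphAvg, hμcast, setAverage_eq, smul_eq_mul, hμs, measureReal_def]
  -- ball volume constants
  set B : ℝ≥0∞ := volume (ball (0 : EuclideanSpace ℝ (Fin D)) 1) with hB
  have hB0 : B ≠ 0 := (measure_ball_pos _ _ one_pos).ne'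
  have hBt : B ≠ ⊤ := measure_ball_lt_top.ne
  set v : ℝ := B.toReal with hv
  have hvpos : 0 < v := ENNReal.toReal_pos hB0 hBt
  set Kd : ℝ := (D:ℝ) * 3 ^ D * 4 with hKd
  have hKdpos : 0 < Kd := by positivity
  set C' : ℝ := max C 0 with hC'
  have hofC : ENNReal.ofReal C ≤ ENNReal.ofReal C' := ENNReal.ofReal_le_ofReal (le_max_left _ _)
  have hqn0 : ENNReal.ofReal q ≠ 0 := by
    simp only [ne_eq, ENNReal.ofReal_eq_zero, not_le]; linarith
  have hpn0 : ENNReal.ofReal p ≠ 0 := by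
    simp only [ne_eq, ENNReal.ofReal_eq_zero, not_le]; linarith
  have hqtr : (ENNReal.ofReal q).toReal = q := ENNReal.toReal_ofReal hq0.le
  have hptr : (ENNReal.ofReal p).toReal = p := ENNReal.toReal_ofReal hp0.le
  -- main inequality for each δ
  have hδineq : ∀ δ : ℝ, 0 < δ → δ ≤ 1/2 →
      v ^ (1/q) * δ ^ ((D:ℝ)/q) ≤ (C' * (Kd * v) ^ (1/p)) * δ ^ (1/p) := by
    intro δ hδ hδ2
    -- the test function
    set f : EuclideanSpace ℝ (Fin D) → ℝ :=
      fun z => min 1 (max 0 (2 - |‖z‖ - t0| / δ)) with hf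
    have hf01 : ∀ z, 0 ≤ f z ∧ f z ≤ 1 := fun z =>
      ⟨le_min (by norm_num) (le_max_left _ _), min_le_left _ _⟩
    have hfabs : ∀ z, |f z| ≤ 1 := fun z => by
      rw [abs_of_nonneg (hf01 z).1]; exact (hf01 z).2
    have hf_one : ∀ z : EuclideanSpace ℝ (Fin D), |‖z‖ - t0| ≤ δ → f z = 1 := by
      intro z hz
      have h1 : |‖z‖ - t0| / δ ≤ 1 := by rw [div_le_one hδ]; exact hz
      have : (1:ℝ) ≤ 2 - |‖z‖ - t0| / δ := by linarith
      rw [hf]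
      exact min_eq_left (le_max_of_le_right this)
    have hf_zero : ∀ z : EuclideanSpace ℝ (Fin D), 2 * δ ≤ |‖z‖ - t0| → f z = 0 := by
      intro z hz
      have h1 : (2:ℝ) ≤ |‖z‖ - t0| / δ := by rw [le_div_iff₀ hδ]; linarith
      have h2 : 2 - |‖z‖ - t0| / δ ≤ 0 := by linarith
      rw [hf]
      simp only [max_eq_left h2]
      exact min_eq_right (by norm_num)
    have hcont : Continuous f := by
      apply Continuous.min continuous_const
      apply Continuous.max continuous_const
      exact continuous_const.sub ((continuous_norm.sub continuous_const).abs.div_const δ)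
    have hsupp : HasCompactSupport f := by
      apply HasCompactSupport.intro (isCompact_closedBall (0 : EuclideanSpace ℝ (Fin D)) (t0 + 2*δ))
      intro z hz
      rw [mem_closedBall, dist_zero_right, not_le] at hz
      exact hf_zero z (by rw [abs_of_pos (by linarith)]; linarith)
    -- lower bound on maxOp
    have hmax_ge : ∀ x : EuclideanSpace ℝ (Fin D), ‖x‖ ≤ δ → 1 ≤ maxOp D E f x := by
      intro x hx
      have hval : sphAvg D f t0 x = 1 := by
        rw [havg]
        rw [setIntegral_congr_fun isClosed_sphere.measurableSet
          (g := fun _ => (1:ℝ)) ?_]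
        · rw [setIntegral_const, smul_eq_mul, mul_one, measureReal_def, ← hμs, inv_mul_cancel₀ hμtR.ne']
        · intro y hy
          rw [mem_sphere_zero_iff_norm] at hy
          apply hf_one
          have hn : ‖t0 • y‖ = t0 := by
            rw [norm_smul, Real.norm_eq_abs, abs_of_pos ht0pos, hy, mul_one]
          have : |‖x - t0 • y‖ - t0| ≤ ‖x‖ := by
            have h1 := abs_norm_sub_norm_le (x - t0 • y) (-(t0 • y))
            rw [norm_neg, hn] at h1
            simpa using h1
          linarith
      have hbdd : BddAbove (Set.range fun t : E => |sphAvg D f t x|) := by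
        refine ⟨1, ?_⟩
        rintro _ ⟨t, rfl⟩
        show |sphAvg D f (↑t) x| ≤ 1
        rw [havg, abs_mul, abs_of_nonneg (inv_nonneg.2 ENNReal.toReal_nonneg)]
        have hint : ‖∫ y in sphere (0 : EuclideanSpace ℝ (Fin D)) 1,
            f (x - (t:ℝ) • y) ∂μH[(n:ℝ)]‖ ≤ 1 * μs.toReal := by
          apply norm_setIntegral_le_of_norm_le_const hμfin
          intro y _
          rw [Real.norm_eq_abs]
          exact hfabs _
        rw [Real.norm_eq_abs] at hint
        calc (μs.toReal)⁻¹ * |∫ y in sphere (0 : EuclideanSpace ℝ (Fin D)) 1,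
              f (x - (t:ℝ) • y) ∂μH[(n:ℝ)]|
            ≤ (μs.toReal)⁻¹ * (1 * μs.toReal) := by
              apply mul_le_mul_of_nonneg_left hint (by positivity)
          _ = 1 := by field_simp
      calc (1:ℝ) = |sphAvg D f t0 x| := by rw [hval]; norm_num
        _ ≤ ⨆ t : E, |sphAvg D f t x| := le_ciSup hbdd ⟨t0, ht0E⟩
        _ = maxOp D E f x := rfl
    -- eLpNorm lower bound
    have hlow : eLpNorm ((closedBall (0 : EuclideanSpace ℝ (Fin D)) δ).indicator
        fun _ => (1:ℝ)) (ENNReal.ofReal q) volume ≤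
        eLpNorm (maxOp D E f) (ENNReal.ofReal q) volume := by
      apply eLpNorm_mono
      intro x
      by_cases hx : x ∈ closedBall (0 : EuclideanSpace ℝ (Fin D)) δ
      · rw [Set.indicator_of_mem hx, norm_one, Real.norm_eq_abs]
        rw [mem_closedBall, dist_zero_right] at hx
        exact le_trans (hmax_ge x hx) (le_abs_self _)
      · rw [Set.indicator_of_notMem hx, norm_zero]
        exact norm_nonneg _
    have hlow2 : (ENNReal.ofReal (δ ^ D) * B) ^ (1/q) ≤
        eLpNorm (maxOp D E f) (ENNReal.ofReal q) volume := by
      refine le_trans (le_of_eq ?_) hlow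
      rw [eLpNorm_indicator_const measurableSet_closedBall hqn0 ENNReal.ofReal_ne_top]
      rw [hqtr]
      rw [Measure.addHaar_closedBall (volume) 0 hδ.le, finrank_euclideanSpace_fin]
      simp [hB]
    -- eLpNorm upper bound
    set S : Set (EuclideanSpace ℝ (Fin D)) :=
      closedBall 0 (t0 + 2*δ) \ ball 0 (t0 - 2*δ) with hS
    have hup : eLpNorm f (ENNReal.ofReal p) volume ≤
        eLpNorm (S.indicator fun _ => (1:ℝ)) (ENNReal.ofReal p) volume := by
      apply eLpNorm_mono
      intro z
      by_cases hz : z ∈ S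
      · rw [Set.indicator_of_mem hz, norm_one, Real.norm_eq_abs]
        exact hfabs z
      · rw [Set.indicator_of_notMem hz, norm_zero, Real.norm_eq_abs]
        rw [hS, Set.mem_diff, not_and_or, not_not] at hz
        have : f z = 0 := by
          rcases hz with hz | hz
          · rw [mem_closedBall, dist_zero_right, not_le] at hz
            exact hf_zero z (by rw [abs_of_pos (by linarith)]; linarith)
          · rw [mem_ball, dist_zero_right] at hz
            exact hf_zero z (by rw [abs_of_neg (by linarith)]; linarith)
        rw [this, abs_zero]
    have hvolS : volume S ≤ ENNReal.ofReal (Kd * δ) * B := by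
      rw [hS, measure_diff (ball_subset_closedBall.trans
          (closedBall_subset_closedBall (by linarith)))
          measurableSet_ball.nullMeasurableSet measure_ball_lt_top.ne]
      rw [Measure.addHaar_closedBall (volume) 0 (by linarith), finrank_euclideanSpace_fin]
      rw [Measure.addHaar_ball (volume) 0 (by linarith : (0:ℝ) ≤ t0 - 2*δ),
        finrank_euclideanSpace_fin]
      rw [tsub_le_iff_right, ← hB, ← add_mul, ← ENNReal.ofReal_add
        (mul_nonneg hKdpos.le hδ.le) (pow_nonneg (by linarith) D)]
      apply mul_le_mul_left
      apply ENNReal.ofReal_le_ofReal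
      have hkey := pow_sub_pow_le_aux D (show (0:ℝ) ≤ t0 - 2*δ by linarith)
        (show t0 - 2*δ ≤ t0 + 2*δ by linarith) (show t0 + 2*δ ≤ 3 by linarith)
      rw [hKd]
      nlinarith [hkey]
    have hup2 : eLpNorm f (ENNReal.ofReal p) volume ≤
        (ENNReal.ofReal (Kd * δ) * B) ^ (1/p) := by
      refine le_trans hup ?_
      rw [eLpNorm_indicator_const (measurableSet_closedBall.diff measurableSet_ball)
        hpn0 ENNReal.ofReal_ne_top, hptr]
      simp only [enorm_one, one_mul]
      exact ENNReal.rpow_le_rpow hvolS (by positivity)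
    -- combine
    have hEN : (ENNReal.ofReal (δ ^ D) * B) ^ (1/q) ≤
        ENNReal.ofReal C' * (ENNReal.ofReal (Kd * δ) * B) ^ (1/p) := by
      calc (ENNReal.ofReal (δ ^ D) * B) ^ (1/q)
          ≤ eLpNorm (maxOp D E f) (ENNReal.ofReal q) volume := hlow2
        _ ≤ ENNReal.ofReal C * eLpNorm f (ENNReal.ofReal p) volume := hbound f hcont hsupp
        _ ≤ ENNReal.ofReal C' * (ENNReal.ofReal (Kd * δ) * B) ^ (1/p) :=
            mul_le_mul' hofC hup2
    -- convert to real
    have hRns : (ENNReal.ofReal C' * (ENNReal.ofReal (Kd * δ) * B) ^ (1/p)) ≠ ⊤ := by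
      apply ENNReal.mul_ne_top ENNReal.ofReal_ne_top
      exact ENNReal.rpow_ne_top_of_nonneg (by positivity)
        (ENNReal.mul_ne_top ENNReal.ofReal_ne_top hBt)
    have hreal := ENNReal.toReal_mono hRns hEN
    have hL : (((ENNReal.ofReal (δ ^ D) * B) ^ (1/q)).toReal : ℝ)
        = (δ ^ D * v) ^ (1/q) := by
      rw [← ENNReal.toReal_rpow, ENNReal.toReal_mul,
        ENNReal.toReal_ofReal (pow_nonneg hδ.le D)]
    have hR : ((ENNReal.ofReal C' * (ENNReal.ofReal (Kd * δ) * B) ^ (1/p)).toReal : ℝ)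
        = C' * ((Kd * δ) * v) ^ (1/p) := by
      rw [ENNReal.toReal_mul, ← ENNReal.toReal_rpow, ENNReal.toReal_mul,
        ENNReal.toReal_ofReal (le_max_right C 0),
        ENNReal.toReal_ofReal (mul_nonneg hKdpos.le hδ.le)]
    rw [hL, hR] at hreal
    -- now hreal : (δ^D * v)^(1/q) ≤ C' * ((Kd*δ) * v)^(1/p)
    calc v ^ (1/q) * δ ^ ((D:ℝ)/q) = (δ ^ D * v) ^ (1/q) := by
          rw [Real.mul_rpow (by positivity) hvpos.le, ← Real.rpow_natCast δ D,
            ← Real.rpow_mul hδ.le]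
          rw [mul_one_div, mul_comm]
      _ ≤ C' * (Kd * δ * v) ^ (1/p) := hreal
      _ = (C' * (Kd * v) ^ (1/p)) * δ ^ (1/p) := by
          rw [show Kd * δ * v = (Kd * v) * δ by ring,
            Real.mul_rpow (by positivity) hδ.le]
          ring
  -- conclude
  have := rpow_exponent_le (Real.rpow_pos_of_pos hvpos (1/q)) hδineq
  exact this
end

section
/- Let 0 < β < γ < 1 and let E be the set of the Cantor-block construction (E = ⋃_k bd(C^μ_{m(k)}(J_k)) with λ = 2^{-1/β}, μ = 2^{-1/γ}, J_k = [1+λ^{k+1}, 1+λ^k], m(k) = 1+⌊k/(1-β/γ)⌋). Then N(E ∩ J_k, δ_k) = 2^{m(k)} where δ_k = λ^{k-1} μ^{m(k)}, up to absolute multiplicative constants; consequently there exist c > 0 and a sequence δ_k → 0 with N(E ∩ J_k, δ_k) ≥ c (δ_k/|J_k|)^{-γ} and N(E ∩ J_k, δ_k) ≥ c δ_k^{-β}. -/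
open Set

/-- Minimal number of compact intervals of length `δ` needed to cover `E`. -/
noncomputable def coverNum (E : Set ℝ) (δ : ℝ) : ℕ :=
  sInf {n : ℕ | ∃ f : Fin n → ℝ, E ⊆ ⋃ i, Set.Icc (f i) (f i + δ)}

/-- Left endpoint of the interval of the `k`-th generation of the Cantor
construction with dissection ratio `μ` on `[a,b]` indexed by the bit-word `w`. -/
noncomputable def cantorLeft (μ a b : ℝ) (k : ℕ) (w : Fin k → Bool) : ℝ :=
  a + (b - a) * ∑ i : Fin k, (if w i then (1 - μ) * μ ^ (i : ℕ) else 0)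

/-- The set of endpoints of the `2^k` intervals of the `k`-th generation of the
Cantor construction with dissection ratio `μ` on `[a,b]`. -/
noncomputable def cantorEndpoints (μ a b : ℝ) (k : ℕ) : Set ℝ :=
  {x | ∃ w : Fin k → Bool,
    x = cantorLeft μ a b k w ∨ x = cantorLeft μ a b k w + μ ^ k * (b - a)}

/-- `λ = 2^{-1/β}`. -/
noncomputable def lamb (β : ℝ) : ℝ := 2 ^ (-(1 / β))

/-- `μ = 2^{-1/γ}`. -/
noncomputable def mug (γ : ℝ) : ℝ := 2 ^ (-(1 / γ))

/-- `m(k) = 1 + ⌊k/θ⌋` with `θ = 1 - β/γ`. -/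
noncomputable def mGen (β γ : ℝ) (k : ℕ) : ℕ := 1 + (⌊(k : ℝ) / (1 - β / γ)⌋).toNat

/-- The interval `J_k = [1 + λ^{k+1}, 1 + λ^k]`. -/
noncomputable def Jk (β : ℝ) (k : ℕ) : Set ℝ :=
  Set.Icc (1 + lamb β ^ (k + 1)) (1 + lamb β ^ k)

/-- `E_k`: the endpoint set of the `m(k)`-th generation Cantor construction with
ratio `μ = 2^{-1/γ}` on `J_k`. -/
noncomputable def Ek (β γ : ℝ) (k : ℕ) : Set ℝ :=
  cantorEndpoints (mug γ) (1 + lamb β ^ (k + 1)) (1 + lamb β ^ k) (mGen β γ k)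

/-- The Cantor-block set `E = ⋃_{k ≥ 1} E_k`. -/
noncomputable def blockSet (β γ : ℝ) : Set ℝ :=
  ⋃ k ∈ {k : ℕ | 1 ≤ k}, Ek β γ k

/-- `δ_k = λ^{k-1} μ^{m(k)}`. -/
noncomputable def delk (β γ : ℝ) (k : ℕ) : ℝ := lamb β ^ (k - 1) * mug γ ^ mGen β γ k

/-! ### Auxiliary lemmas -/

/-- The digit sum appearing in `cantorLeft`. -/
noncomputable def bsum (μ : ℝ) (m : ℕ) (w : Fin m → Bool) : ℝ :=
  ∑ i : Fin m, (if w i then (1 - μ) * μ ^ (i : ℕ) else 0)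

lemma cantorLeft_eq (μ a b : ℝ) (m : ℕ) (w : Fin m → Bool) :
    cantorLeft μ a b m w = a + (b - a) * bsum μ m w := rfl

lemma bsum_nonneg {μ : ℝ} (hμ0 : 0 ≤ μ) (hμ1 : μ ≤ 1) (m : ℕ) (w : Fin m → Bool) :
    0 ≤ bsum μ m w := by
  apply Finset.sum_nonneg
  intro i _
  split
  · exact mul_nonneg (by linarith) (pow_nonneg hμ0 _)
  · exact le_rfl

lemma bsum_le {μ : ℝ} (hμ0 : 0 ≤ μ) (hμ1 : μ ≤ 1) (m : ℕ) (w : Fin m → Bool) :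
    bsum μ m w ≤ 1 - μ ^ m := by
  have h1 : bsum μ m w ≤ ∑ i : Fin m, (1 - μ) * μ ^ (i : ℕ) := by
    apply Finset.sum_le_sum
    intro i _
    split
    · exact le_rfl
    · exact mul_nonneg (by linarith) (pow_nonneg hμ0 _)
  have h2 : ∑ i : Fin m, (1 - μ) * μ ^ (i : ℕ) = 1 - μ ^ m := by
    rw [Fin.sum_univ_eq_sum_range (fun i => (1 - μ) * μ ^ i) m, ← Finset.mul_sum]
    have := geom_sum_mul μ m
    nlinarith [this]
  linarith

lemma bsum_false (μ : ℝ) (m : ℕ) : bsum μ m (fun _ => false) = 0 := by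
  simp [bsum]

lemma bsum_true (μ : ℝ) (m : ℕ) : bsum μ m (fun _ => true) = 1 - μ ^ m := by
  rw [bsum]
  simp only [if_pos]
  rw [Fin.sum_univ_eq_sum_range (fun i => (1 - μ) * μ ^ i) m, ← Finset.mul_sum]
  have := geom_sum_mul μ m
  nlinarith [this]

lemma bsum_succ (μ : ℝ) (n : ℕ) (v : Fin (n+1) → Bool) :
    bsum μ (n+1) v = (if v 0 then (1 - μ) else 0) + μ * bsum μ n (fun i => v i.succ) := by
  rw [bsum, Fin.sum_univ_succ, bsum, Finset.mul_sum]
  congr 1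
  · simp
  · refine Finset.sum_congr rfl fun i _ => ?_
    rw [Fin.val_succ]
    split <;> ring

lemma bsum_abs_le {μ : ℝ} (hμ0 : 0 ≤ μ) (hμ1 : μ ≤ 1) (m : ℕ) (w w' : Fin m → Bool) :
    |bsum μ m w - bsum μ m w'| ≤ 1 := by
  have h1 := bsum_nonneg hμ0 hμ1 m w
  have h2 := bsum_le hμ0 hμ1 m w
  have h3 := bsum_nonneg hμ0 hμ1 m w'
  have h4 := bsum_le hμ0 hμ1 m w'
  have hp : (0:ℝ) ≤ μ ^ m := pow_nonneg hμ0 m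
  rw [abs_le]; constructor <;> linarith

lemma bsum_sep {μ : ℝ} (hμ0 : 0 < μ) (hμ : μ < 1/2) :
    ∀ m (w w' : Fin m → Bool), w ≠ w' →
      (1 - 2*μ) * μ ^ m ≤ |bsum μ m w - bsum μ m w'| := by
  intro m
  induction m with
  | zero =>
    intro w w' h
    exact absurd (funext fun i => i.elim0) h
  | succ n ih =>
    intro w w' h
    rw [bsum_succ, bsum_succ]
    by_cases h0 : w 0 = w' 0
    · have ht : (fun i => w (Fin.succ i)) ≠ (fun i => w' (Fin.succ i)) := by
        intro hh
        apply h
        funext i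
        refine Fin.cases ?_ ?_ i
        · exact h0
        · intro j; exact congrFun hh j
      have := ih _ _ ht
      rw [h0]
      have heq : (if w' 0 then (1-μ) else 0) + μ * bsum μ n (fun i => w (Fin.succ i)) -
          ((if w' 0 then (1-μ) else 0) + μ * bsum μ n (fun i => w' (Fin.succ i)))
          = μ * (bsum μ n (fun i => w (Fin.succ i)) - bsum μ n (fun i => w' (Fin.succ i))) := by
        ring
      rw [heq, abs_mul, abs_of_pos hμ0]
      calc (1 - 2*μ) * μ ^ (n+1) = μ * ((1 - 2*μ) * μ ^ n) := by ring
        _ ≤ μ * |bsum μ n (fun i => w (Fin.succ i)) - bsum μ n (fun i => w' (Fin.succ i))| := by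
            apply mul_le_mul_of_nonneg_left this hμ0.le
    · have habs : |bsum μ n (fun i => w (Fin.succ i)) - bsum μ n (fun i => w' (Fin.succ i))| ≤ 1 :=
        bsum_abs_le hμ0.le (by linarith) n _ _
      set D := bsum μ n (fun i => w (Fin.succ i)) - bsum μ n (fun i => w' (Fin.succ i)) with hD
      have key : (if w 0 then (1-μ) else 0) + μ * bsum μ n (fun i => w (Fin.succ i)) -
          ((if w' 0 then (1-μ) else 0) + μ * bsum μ n (fun i => w' (Fin.succ i)))
          = ((if w 0 then (1-μ) else 0) - (if w' 0 then (1-μ) else 0)) + μ * D := by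
        rw [hD]; ring
      rw [key]
      have hd : |(if w 0 then (1-μ) else 0) - (if w' 0 then (1-μ) else 0)| = 1 - μ := by
        rcases Bool.eq_false_or_eq_true (w 0) with hw | hw <;>
          rcases Bool.eq_false_or_eq_true (w' 0) with hw' | hw'
        · exact absurd (hw.trans hw'.symm) h0
        · rw [if_pos hw, if_neg (by simp [hw']), sub_zero, abs_of_nonneg (by linarith)]
        · rw [if_neg (by simp [hw]), if_pos hw', zero_sub, abs_neg,
            abs_of_nonneg (by linarith)]
        · exact absurd (hw.trans hw'.symm) h0
      have h1 : |(if w 0 then (1-μ) else 0) - (if w' 0 then (1-μ) else 0)| - |μ * D|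
          ≤ |((if w 0 then (1-μ) else 0) - (if w' 0 then (1-μ) else 0)) + μ * D| := by
        have := abs_sub_abs_le_abs_sub ((if w 0 then (1-μ) else 0) - (if w' 0 then (1-μ) else 0))
          (-(μ * D))
        simpa [sub_neg_eq_add] using this
      have h2 : |μ * D| ≤ μ := by
        rw [abs_mul, abs_of_pos hμ0]
        calc μ * |D| ≤ μ * 1 := mul_le_mul_of_nonneg_left habs hμ0.le
          _ = μ := mul_one μ
      have h3 : μ ^ (n+1) ≤ 1 := pow_le_one₀ hμ0.le (by linarith)
      have h4 : (0:ℝ) ≤ 1 - 2*μ := by linarith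
      nlinarith [hd, h1, h2, h3, h4]

lemma cantorLeft_sub (μ a b : ℝ) (m : ℕ) (w w' : Fin m → Bool) :
    cantorLeft μ a b m w - cantorLeft μ a b m w' = (b - a) * (bsum μ m w - bsum μ m w') := by
  simp only [cantorLeft, bsum]; ring

lemma cantorLeft_sep {μ a b : ℝ} (hab : a < b) (hμ0 : 0 < μ) (hμ : μ < 1/2) (m : ℕ)
    {w w' : Fin m → Bool} (h : w ≠ w') :
    (1 - 2*μ) * μ ^ m * (b - a) ≤ |cantorLeft μ a b m w - cantorLeft μ a b m w'| := by
  rw [cantorLeft_sub, abs_mul, abs_of_pos (by linarith : (0:ℝ) < b - a)]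
  calc (1 - 2*μ) * μ ^ m * (b - a) = (b - a) * ((1 - 2*μ) * μ ^ m) := by ring
    _ ≤ (b - a) * |bsum μ m w - bsum μ m w'| :=
        mul_le_mul_of_nonneg_left (bsum_sep hμ0 hμ m w w' h) (by linarith)

lemma cantorLeft_injective {μ a b : ℝ} (hab : a < b) (hμ0 : 0 < μ) (hμ : μ < 1/2) (m : ℕ) :
    Function.Injective (cantorLeft μ a b m) := by
  intro w w' hww
  by_contra hne
  have h1 := cantorLeft_sep hab hμ0 hμ m hne
  rw [hww, sub_self, abs_zero] at h1
  have h2 : 0 < (1 - 2*μ) * μ ^ m * (b - a) := by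
    apply mul_pos (mul_pos (by linarith) (pow_pos hμ0 m)) (by linarith)
  linarith

lemma cantorEndpoints_subset {μ a b : ℝ} (hab : a ≤ b) (hμ0 : 0 ≤ μ) (hμ1 : μ ≤ 1) (m : ℕ) :
    cantorEndpoints μ a b m ⊆ Set.Icc a b := by
  rintro x ⟨w, hx | hx⟩ <;> subst hx
  · constructor
    · have := bsum_nonneg hμ0 hμ1 m w
      have : 0 ≤ (b - a) * bsum μ m w :=
        mul_nonneg (by linarith) (bsum_nonneg hμ0 hμ1 m w)
      rw [cantorLeft_eq]; linarith [this]
    · have h1 := bsum_le hμ0 hμ1 m w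
      have hp : (0:ℝ) ≤ μ ^ m := pow_nonneg hμ0 m
      have : (b - a) * bsum μ m w ≤ (b - a) * 1 :=
        mul_le_mul_of_nonneg_left (by linarith) (by linarith)
      rw [cantorLeft_eq]; nlinarith [bsum_le hμ0 hμ1 m w]
  · constructor
    · have h0 := bsum_nonneg hμ0 hμ1 m w
      have hp : (0:ℝ) ≤ μ ^ m := pow_nonneg hμ0 m
      rw [cantorLeft_eq]; nlinarith
    · have h1 := bsum_le hμ0 hμ1 m w
      rw [cantorLeft_eq]; nlinarith

lemma left_mem_cantorEndpoints (μ a b : ℝ) (m : ℕ) : a ∈ cantorEndpoints μ a b m := by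
  refine ⟨fun _ => false, Or.inl ?_⟩
  rw [cantorLeft_eq, bsum_false]; ring

lemma right_mem_cantorEndpoints (μ a b : ℝ) (m : ℕ) : b ∈ cantorEndpoints μ a b m := by
  refine ⟨fun _ => true, Or.inr ?_⟩
  rw [cantorLeft_eq, bsum_true]; ring

lemma card_le_of_sep (P : Finset ℝ) (s δ c : ℝ) (hs : 0 < s) (hδ : 0 ≤ δ)
    (hsep : ∀ p ∈ P, ∀ q ∈ P, p ≠ q → s ≤ |p - q|)
    (hsub : ∀ p ∈ P, p ∈ Set.Icc c (c + δ)) :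
    (P.card : ℝ) ≤ δ / s + 1 := by
  have hds : (0:ℝ) ≤ δ / s := div_nonneg hδ hs.le
  classical
  set g : ℝ → ℤ := fun p => ⌊(p - c) / s⌋ with hg
  have hinj : Set.InjOn g P := by
    intro p hp q hq hpq
    by_contra hne
    have hsep' := hsep p hp q hq hne
    have h1 : |(p - c)/s - (q - c)/s| < 1 := Int.abs_sub_lt_one_of_floor_eq_floor hpq
    have h2 : (p - c)/s - (q - c)/s = (p - q)/s := by ring
    rw [h2, abs_div, abs_of_pos hs, div_lt_one hs] at h1
    linarith
  have himg : P.image g ⊆ Finset.Icc 0 ⌊δ / s⌋ := by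
    intro x hx
    simp only [Finset.mem_image] at hx
    obtain ⟨p, hp, rfl⟩ := hx
    obtain ⟨hp1, hp2⟩ := hsub p hp
    rw [Finset.mem_Icc]
    constructor
    · exact Int.floor_nonneg.2 (div_nonneg (by linarith) hs.le)
    · exact Int.floor_le_floor (by gcongr; linarith)
  have hcard : P.card = (P.image g).card := (Finset.card_image_of_injOn hinj).symm
  have h3 : (P.image g).card ≤ (Finset.Icc (0:ℤ) ⌊δ / s⌋).card := Finset.card_le_card himg
  have h4 : (Finset.Icc (0:ℤ) ⌊δ / s⌋).card = (⌊δ / s⌋ + 1).toNat := by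
    rw [Int.card_Icc]; ring_nf
  have h5 : ((⌊δ / s⌋ + 1).toNat : ℝ) ≤ δ / s + 1 := by
    have hnn : (0:ℤ) ≤ ⌊δ / s⌋ + 1 := add_nonneg (Int.floor_nonneg.2 hds) zero_le_one
    rw [← Int.cast_natCast (R := ℝ), Int.toNat_of_nonneg hnn]
    push_cast
    have := Int.floor_le (δ / s)
    linarith
  calc (P.card : ℝ) = ((P.image g).card : ℝ) := by rw [hcard]
    _ ≤ ((Finset.Icc (0:ℤ) ⌊δ / s⌋).card : ℝ) := by exact_mod_cast h3
    _ = ((⌊δ / s⌋ + 1).toNat : ℝ) := by rw [h4]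
    _ ≤ δ / s + 1 := h5

lemma cover_lower {μ a b δ : ℝ} (hab : a < b) (hμ0 : 0 < μ) (hμ : μ < 1/2) (hδ : 0 ≤ δ)
    (m n : ℕ) (f : Fin n → ℝ)
    (hcov : cantorEndpoints μ a b m ⊆ ⋃ i, Set.Icc (f i) (f i + δ)) :
    (2:ℝ) ^ m ≤ n * (δ / ((1 - 2*μ) * μ ^ m * (b - a)) + 1) := by
  classical
  set s := (1 - 2*μ) * μ ^ m * (b - a) with hs_def
  have hs : 0 < s := mul_pos (mul_pos (by linarith) (pow_pos hμ0 m)) (by linarith)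
  set L : Finset ℝ := Finset.image (cantorLeft μ a b m) Finset.univ with hL
  have hLcard : L.card = 2 ^ m := by
    rw [hL, Finset.card_image_of_injective _ (cantorLeft_injective hab hμ0 hμ m)]
    simp
  have hLsep : ∀ p ∈ L, ∀ q ∈ L, p ≠ q → s ≤ |p - q| := by
    intro p hp q hq hpq
    rw [hL, Finset.mem_image] at hp hq
    obtain ⟨w, -, rfl⟩ := hp
    obtain ⟨w', -, rfl⟩ := hq
    have hww : w ≠ w' := fun hh => hpq (by rw [hh])
    exact cantorLeft_sep hab hμ0 hμ m hww
  have hsubU : L ⊆ Finset.univ.biUnion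
      (fun i : Fin n => L.filter (fun p => p ∈ Set.Icc (f i) (f i + δ))) := by
    intro p hp
    have hpE : p ∈ cantorEndpoints μ a b m := by
      rw [hL, Finset.mem_image] at hp
      obtain ⟨w, -, rfl⟩ := hp
      exact ⟨w, Or.inl rfl⟩
    have := hcov hpE
    rw [Set.mem_iUnion] at this
    obtain ⟨i, hi⟩ := this
    rw [Finset.mem_biUnion]
    exact ⟨i, Finset.mem_univ i, Finset.mem_filter.2 ⟨hp, hi⟩⟩
  have hcount : (L.card : ℝ) ≤ (n : ℝ) * (δ / s + 1) := by
    have h1 : L.card ≤ ∑ i : Fin n, (L.filter (fun p => p ∈ Set.Icc (f i) (f i + δ))).card :=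
      le_trans (Finset.card_le_card hsubU) (Finset.card_biUnion_le)
    have h2 : ∀ i : Fin n,
        ((L.filter (fun p => p ∈ Set.Icc (f i) (f i + δ))).card : ℝ) ≤ δ / s + 1 := by
      intro i
      apply card_le_of_sep _ s δ (f i) hs hδ
      · intro p hp q hq hpq
        exact hLsep p (Finset.mem_filter.1 hp).1 q (Finset.mem_filter.1 hq).1 hpq
      · intro p hp
        exact (Finset.mem_filter.1 hp).2
    calc (L.card : ℝ) ≤ ∑ i : Fin n,
          ((L.filter (fun p => p ∈ Set.Icc (f i) (f i + δ))).card : ℝ) := by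
          exact_mod_cast h1
      _ ≤ ∑ _i : Fin n, (δ / s + 1) := Finset.sum_le_sum (fun i _ => h2 i)
      _ = (n : ℝ) * (δ / s + 1) := by rw [Finset.sum_const]; simp [mul_comm]; ring
  calc (2:ℝ) ^ m = (L.card : ℝ) := by rw [hLcard]; push_cast; ring
    _ ≤ (n : ℝ) * (δ / s + 1) := hcount
    _ = (n : ℝ) * (δ / ((1 - 2*μ) * μ ^ m * (b - a)) + 1) := by rw [hs_def]

lemma cover_upper {μ a b δ : ℝ} (hab : a ≤ b) (hμ0 : 0 ≤ μ) (m : ℕ)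
    (hδ : μ ^ m * (b - a) ≤ δ) :
    coverNum (cantorEndpoints μ a b m) δ ≤ 2 ^ m := by
  apply Nat.sInf_le
  have hcard : Fintype.card (Fin m → Bool) = 2 ^ m := by simp
  let e : (Fin m → Bool) ≃ Fin (2 ^ m) := Fintype.equivFinOfCardEq hcard
  refine ⟨fun j => cantorLeft μ a b m (e.symm j), ?_⟩
  rintro x ⟨w, hx | hx⟩ <;> subst hx
  · refine Set.mem_iUnion.2 ⟨e w, ?_⟩
    simp only [Equiv.symm_apply_apply]
    have h0 : (0:ℝ) ≤ μ ^ m * (b - a) := mul_nonneg (pow_nonneg hμ0 m) (by linarith)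
    exact ⟨le_refl _, by linarith⟩
  · refine Set.mem_iUnion.2 ⟨e w, ?_⟩
    simp only [Equiv.symm_apply_apply]
    have h0 : (0:ℝ) ≤ μ ^ m * (b - a) := mul_nonneg (pow_nonneg hμ0 m) (by linarith)
    exact ⟨by linarith, by linarith⟩

lemma lamb_pos {β : ℝ} : 0 < lamb β := Real.rpow_pos_of_pos two_pos _

lemma lamb_lt_one {β : ℝ} (hβ0 : 0 < β) : lamb β < 1 :=
  Real.rpow_lt_one_of_one_lt_of_neg one_lt_two (by rw [neg_lt, neg_zero]; positivity)

lemma mug_pos {γ : ℝ} : 0 < mug γ := Real.rpow_pos_of_pos two_pos _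

lemma mug_lt_half {γ : ℝ} (hγ0 : 0 < γ) (hγ1 : γ < 1) : mug γ < 1/2 := by
  have h1 : (2:ℝ) ^ (-(1/γ)) < 2 ^ (-(1:ℝ)) :=
    Real.rpow_lt_rpow_of_exponent_lt one_lt_two (by
      have := one_lt_one_div hγ0 hγ1; linarith)
  have h2 : (2:ℝ) ^ (-(1:ℝ)) = 1/2 := by
    rw [Real.rpow_neg (by norm_num), Real.rpow_one]; norm_num
  rw [mug]; rw [h2] at h1; exact h1

lemma blockSet_inter {β γ : ℝ} (hβ0 : 0 < β) (hβγ : β < γ) (hγ1 : γ < 1) (k : ℕ)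
    (hk : 1 ≤ k) : blockSet β γ ∩ Jk β k = Ek β γ k := by
  have hγ0 : 0 < γ := hβ0.trans hβγ
  have hl0 : 0 < lamb β := lamb_pos
  have hl1 : lamb β < 1 := lamb_lt_one hβ0
  have hu0 : 0 < mug γ := mug_pos
  have hu1 : mug γ < 1 := by have := mug_lt_half hγ0 hγ1; linarith
  have hsub : ∀ j : ℕ, Ek β γ j ⊆ Jk β j := by
    intro j
    rw [Ek, Jk]
    apply cantorEndpoints_subset _ hu0.le hu1.le
    have : lamb β ^ (j+1) ≤ lamb β ^ j := pow_le_pow_of_le_one hl0.le hl1.le (by omega)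
    linarith
  apply Set.Subset.antisymm
  · rintro x ⟨hxE, hxJ⟩
    rw [blockSet, Set.mem_iUnion₂] at hxE
    obtain ⟨j, hj, hxj⟩ := hxE
    rcases lt_trichotomy j k with hjk | rfl | hjk
    · have h1 : 1 + lamb β ^ (j+1) ≤ x := (hsub j hxj).1
      have h2 : x ≤ 1 + lamb β ^ k := hxJ.2
      have h3 : lamb β ^ k ≤ lamb β ^ (j+1) := pow_le_pow_of_le_one hl0.le hl1.le (by omega)
      have hx : x = 1 + lamb β ^ k := le_antisymm h2 (by linarith)
      rw [hx]; exact right_mem_cantorEndpoints _ _ _ _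
    · exact hxj
    · have h1 : x ≤ 1 + lamb β ^ j := (hsub j hxj).2
      have h2 : 1 + lamb β ^ (k+1) ≤ x := hxJ.1
      have h3 : lamb β ^ j ≤ lamb β ^ (k+1) := pow_le_pow_of_le_one hl0.le hl1.le (by omega)
      have hx : x = 1 + lamb β ^ (k+1) := le_antisymm (by linarith) h2
      rw [hx]; exact left_mem_cantorEndpoints _ _ _ _
  · intro x hx
    exact ⟨Set.mem_biUnion hk hx, hsub k hx⟩

lemma cover_mem {μ a b δ : ℝ} (hab : a ≤ b) (hμ0 : 0 ≤ μ) (m : ℕ)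
    (hδ : μ ^ m * (b - a) ≤ δ) :
    2 ^ m ∈ {n : ℕ | ∃ f : Fin n → ℝ, cantorEndpoints μ a b m ⊆ ⋃ i, Set.Icc (f i) (f i + δ)} := by
  have hcard : Fintype.card (Fin m → Bool) = 2 ^ m := by simp
  let e : (Fin m → Bool) ≃ Fin (2 ^ m) := Fintype.equivFinOfCardEq hcard
  refine ⟨fun j => cantorLeft μ a b m (e.symm j), ?_⟩
  rintro x ⟨w, hx | hx⟩ <;> subst hx
  · refine Set.mem_iUnion.2 ⟨e w, ?_⟩
    simp only [Equiv.symm_apply_apply]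
    have h0 : (0:ℝ) ≤ μ ^ m * (b - a) := mul_nonneg (pow_nonneg hμ0 m) (by linarith)
    exact ⟨le_refl _, by linarith⟩
  · refine Set.mem_iUnion.2 ⟨e w, ?_⟩
    simp only [Equiv.symm_apply_apply]
    have h0 : (0:ℝ) ≤ μ ^ m * (b - a) := mul_nonneg (pow_nonneg hμ0 m) (by linarith)
    exact ⟨by linarith, by linarith⟩

set_option maxHeartbeats 1000000 in
theorem blockSet_lower_counts (β γ : ℝ) (hβ0 : 0 < β) (hβγ : β < γ) (hγ1 : γ < 1) :
    (∃ c₁ > 0, ∃ c₂ > 0, ∀ k : ℕ, 1 ≤ k →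
      c₁ * 2 ^ mGen β γ k ≤ (coverNum (blockSet β γ ∩ Jk β k) (delk β γ k) : ℝ) ∧
      (coverNum (blockSet β γ ∩ Jk β k) (delk β γ k) : ℝ) ≤ c₂ * 2 ^ mGen β γ k) ∧
    Filter.Tendsto (fun k => delk β γ k) Filter.atTop (nhds 0) ∧
    (∃ c > 0, ∀ k : ℕ, 1 ≤ k →
      c * (delk β γ k / (lamb β ^ k - lamb β ^ (k + 1))) ^ (-γ)
          ≤ (coverNum (blockSet β γ ∩ Jk β k) (delk β γ k) : ℝ) ∧
      c * delk β γ k ^ (-β)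
          ≤ (coverNum (blockSet β γ ∩ Jk β k) (delk β γ k) : ℝ)) := by
  have hγ0 : 0 < γ := hβ0.trans hβγ
  have hl0 : 0 < lamb β := lamb_pos
  have hl1 : lamb β < 1 := lamb_lt_one hβ0
  have hu0 : 0 < mug γ := mug_pos
  have hu2 : mug γ < 1/2 := mug_lt_half hγ0 hγ1
  have hu1 : mug γ < 1 := by linarith
  set A : ℝ := 1 / ((1 - 2 * mug γ) * lamb β * (1 - lamb β)) with hA
  have hden : 0 < (1 - 2 * mug γ) * lamb β * (1 - lamb β) :=
    mul_pos (mul_pos (by linarith) hl0) (by linarith)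
  have hApos : 0 < A := by rw [hA]; exact one_div_pos.2 hden
  set c₁ : ℝ := 1 / (A + 1) with hc₁def
  have hc₁ : 0 < c₁ := by rw [hc₁def]; exact one_div_pos.2 (by linarith)
  -- per-`k` facts
  have main : ∀ k : ℕ, 1 ≤ k →
      c₁ * 2 ^ mGen β γ k ≤ (coverNum (blockSet β γ ∩ Jk β k) (delk β γ k) : ℝ) ∧
      (coverNum (blockSet β γ ∩ Jk β k) (delk β γ k) : ℝ) ≤ 1 * 2 ^ mGen β γ k := by
    intro k hk
    set m := mGen β γ k with hm
    set a := 1 + lamb β ^ (k+1) with ha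
    set b := 1 + lamb β ^ k with hb
    have hk1 : k - 1 + 1 = k := Nat.succ_pred_eq_of_pos hk
    have hKl : lamb β ^ k = lamb β ^ (k-1) * lamb β := by rw [← pow_succ, hk1]
    have hKl2 : lamb β ^ (k+1) = lamb β ^ (k-1) * lamb β * lamb β := by
      rw [← hKl, ← pow_succ]
    have hK0 : 0 < lamb β ^ (k-1) := pow_pos hl0 _
    have hU0 : 0 < mug γ ^ m := pow_pos hu0 _
    have hab : a < b := by
      rw [ha, hb, hKl, hKl2]
      nlinarith
    have hδ0 : 0 < delk β γ k := mul_pos hK0 hU0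
    have hll : (0:ℝ) ≤ 1 - lamb β * (1 - lamb β) := by nlinarith [sq_nonneg (lamb β - 1/2)]
    have hδcov : mug γ ^ m * (b - a) ≤ delk β γ k := by
      rw [ha, hb, hKl, hKl2, delk, ← hm]
      nlinarith [mul_nonneg (mul_pos hK0 hU0).le hll]
    have hEq : blockSet β γ ∩ Jk β k = cantorEndpoints (mug γ) a b m :=
      blockSet_inter hβ0 hβγ hγ1 k hk
    rw [hEq]
    have hmem := cover_mem hab.le hu0.le m hδcov
    have hupper : coverNum (cantorEndpoints (mug γ) a b m) (delk β γ k) ≤ 2 ^ m :=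
      Nat.sInf_le hmem
    constructor
    · -- lower bound
      have hNmem := Nat.sInf_mem (⟨2 ^ m, hmem⟩ : Set.Nonempty _)
      obtain ⟨f, hf⟩ := hNmem
      have hlow := cover_lower hab hu0 hu2 hδ0.le m _ f hf
      -- identify the ratio with A
      have hs : 0 < (1 - 2 * mug γ) * mug γ ^ m * (b - a) :=
        mul_pos (mul_pos (by linarith) hU0) (by linarith)
      have hδs : delk β γ k / ((1 - 2 * mug γ) * mug γ ^ m * (b - a)) = A := by
        rw [hA, div_eq_div_iff hs.ne' hden.ne', delk, ha, hb, hKl, hKl2]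
        ring
      rw [hδs] at hlow
      rw [hc₁def, div_mul_eq_mul_div, div_le_iff₀ (by linarith : (0:ℝ) < A + 1)]
      calc (1:ℝ) * 2 ^ m = 2 ^ m := one_mul _
        _ ≤ _ := hlow
    · have : ((coverNum (cantorEndpoints (mug γ) a b m) (delk β γ k)) : ℝ) ≤ (2:ℝ) ^ m := by
        exact_mod_cast hupper
      linarith
  refine ⟨⟨c₁, hc₁, 1, one_pos, main⟩, ?_, ?_⟩
  · -- tendsto
    have hg : Filter.Tendsto (fun k : ℕ => lamb β ^ (k - 1)) Filter.atTop (nhds 0) :=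
      (tendsto_pow_atTop_nhds_zero_of_lt_one hl0.le hl1).comp (Filter.tendsto_sub_atTop_nat 1)
    refine squeeze_zero (fun k => ?_) (fun k => ?_) hg
    · exact (mul_pos (pow_pos hl0 _) (pow_pos hu0 _)).le
    · show delk β γ k ≤ lamb β ^ (k - 1)
      rw [delk]
      calc lamb β ^ (k-1) * mug γ ^ mGen β γ k ≤ lamb β ^ (k-1) * 1 := by
            apply mul_le_mul_of_nonneg_left (pow_le_one₀ hu0.le hu1.le) (pow_pos hl0 _).le
        _ = lamb β ^ (k-1) := mul_one _
  · -- dimension-type lower bounds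
    refine ⟨c₁, hc₁, fun k hk => ?_⟩
    obtain ⟨hlow, -⟩ := main k hk
    set m := mGen β γ k with hm
    have hk1 : k - 1 + 1 = k := Nat.succ_pred_eq_of_pos hk
    have hKl : lamb β ^ k = lamb β ^ (k-1) * lamb β := by rw [← pow_succ, hk1]
    have hKl2 : lamb β ^ (k+1) = lamb β ^ (k-1) * lamb β * lamb β := by
      rw [← hKl, ← pow_succ]
    have hK0 : 0 < lamb β ^ (k-1) := pow_pos hl0 _
    have hU0 : 0 < mug γ ^ m := pow_pos hu0 _
    have hd : 0 < lamb β ^ k - lamb β ^ (k+1) := by rw [hKl, hKl2]; nlinarith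
    have hδ0 : 0 < delk β γ k := mul_pos hK0 hU0
    -- (i)  the `γ` bound
    have hxge : mug γ ^ m ≤ delk β γ k / (lamb β ^ k - lamb β ^ (k+1)) := by
      rw [le_div_iff₀ hd, delk, hKl, hKl2, ← hm]
      have hll : (0:ℝ) ≤ 1 - lamb β * (1 - lamb β) := by nlinarith [sq_nonneg (lamb β - 1/2)]
      nlinarith [mul_nonneg (mul_pos hK0 hU0).le hll]
    have hmug_pow : (mug γ : ℝ) ^ m = (2:ℝ) ^ (-(1/γ) * m) := by
      rw [mug, ← Real.rpow_natCast ((2:ℝ) ^ (-(1/γ))) m, ← Real.rpow_mul (by norm_num)]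
    have hrγ : (delk β γ k / (lamb β ^ k - lamb β ^ (k+1))) ^ (-γ) ≤ (2:ℝ) ^ m := by
      have h1 : (delk β γ k / (lamb β ^ k - lamb β ^ (k+1))) ^ (-γ) ≤ (mug γ ^ m) ^ (-γ) :=
        Real.rpow_le_rpow_of_nonpos hU0 hxge (by linarith)
      have h2 : ((mug γ : ℝ) ^ m) ^ (-γ) = (2:ℝ) ^ (m:ℝ) := by
        rw [hmug_pow, ← Real.rpow_mul (by norm_num : (0:ℝ) ≤ 2)]
        congr 1
        have hγ : γ ≠ 0 := hγ0.ne'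
        field_simp
      rw [h2, Real.rpow_natCast] at h1
      exact h1
    -- (ii) the `β` bound
    have hθ : 0 < 1 - β / γ := by
      have : β / γ < 1 := (div_lt_one hγ0).2 hβγ
      linarith
    have hmge : (k:ℝ) ≤ (1 - β / γ) * m := by
      have hfl : (0:ℤ) ≤ ⌊(k:ℝ) / (1 - β / γ)⌋ :=
        Int.floor_nonneg.2 (div_nonneg (Nat.cast_nonneg k) hθ.le)
      have hcast : (m:ℝ) = (⌊(k:ℝ) / (1 - β / γ)⌋ : ℝ) + 1 := by
        rw [hm, mGen]
        push_cast
        rw [← Int.cast_natCast (R := ℝ), Int.toNat_of_nonneg hfl]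
        ring
      have := Int.lt_floor_add_one ((k:ℝ) / (1 - β / γ))
      rw [← hcast] at this
      have h2 := (div_lt_iff₀ hθ).1 this
      nlinarith
    have hrβ : (delk β γ k) ^ (-β) ≤ (2:ℝ) ^ m := by
      have hdelk_eq : delk β γ k = (2:ℝ) ^ (-(1/β) * ((k:ℝ) - 1) + -(1/γ) * m) := by
        rw [delk, Real.rpow_add (by norm_num), lamb, ← hmug_pow]
        congr 1
        rw [← Real.rpow_natCast ((2:ℝ) ^ (-(1/β))) (k-1), ← Real.rpow_mul (by norm_num)]
        congr 1
        rw [Nat.cast_sub hk]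
        push_cast
        ring
      rw [hdelk_eq, ← Real.rpow_natCast (2:ℝ) m, ← Real.rpow_mul (by norm_num)]
      apply Real.rpow_le_rpow_of_exponent_le one_le_two
      have hexp : (-(1/β) * ((k:ℝ) - 1) + -(1/γ) * m) * (-β) = ((k:ℝ) - 1) + (β/γ) * m := by
        field_simp
        ring
      rw [hexp]
      have : (β/γ) * m = (m:ℝ) - (1 - β/γ) * m := by ring
      rw [this]
      linarith
    constructor
    · calc c₁ * (delk β γ k / (lamb β ^ k - lamb β ^ (k+1))) ^ (-γ)
          ≤ c₁ * (2:ℝ) ^ m := mul_le_mul_of_nonneg_left hrγ hc₁.le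
        _ ≤ _ := hlow
    · calc c₁ * (delk β γ k) ^ (-β)
          ≤ c₁ * (2:ℝ) ^ m := mul_le_mul_of_nonneg_left hrβ hc₁.le
        _ ≤ _ := hlow
end

section
/- Let 0 < β < γ < 1 and let E = ⋃_{k≥1} E_k be the Cantor-block set of the construction (λ = 2^{-1/β}, μ = 2^{-1/γ}, J_k = [1+λ^{k+1}, 1+λ^k], E_k the endpoint set of the m(k)-generation μ-Cantor construction on J_k, m(k) = 1+⌊k/(1-β/γ)⌋, δ_k = λ^{k-1}μ^{m(k)}). Then sup_{0<δ<1} δ^β N(E, δ) < ∞; in particular dim_M E ≤ β. -/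
open Set

/-- Upper Minkowski dimension. -/
noncomputable def minkDim (E : Set ℝ) : ℝ :=
  sInf {β : ℝ | 0 ≤ β ∧ ∀ ε > 0, ∃ C > 0, ∀ δ ∈ Set.Ioo (0:ℝ) 1,
    (coverNum E δ : ℝ) ≤ C * δ ^ (-(β + ε))}


namespace BlockAux

/-- `E` can be covered by `n` closed intervals of length `δ`. -/
def Cov (E : Set ℝ) (δ : ℝ) (n : ℕ) : Prop :=
  ∃ f : Fin n → ℝ, E ⊆ ⋃ i, Set.Icc (f i) (f i + δ)

theorem coverNum_le_of_cov {E : Set ℝ} {δ : ℝ} {n : ℕ} (h : Cov E δ n) :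
    coverNum E δ ≤ n := Nat.sInf_le h

theorem Cov.mono {E F : Set ℝ} {δ : ℝ} {n : ℕ} (hEF : E ⊆ F) (h : Cov F δ n) :
    Cov E δ n := by
  obtain ⟨f, hf⟩ := h
  exact ⟨f, hEF.trans hf⟩

theorem cov_of_fintype {E : Set ℝ} {δ : ℝ} (ι : Type) [Fintype ι] (f : ι → ℝ)
    (h : E ⊆ ⋃ i, Set.Icc (f i) (f i + δ)) : Cov E δ (Fintype.card ι) := by
  refine ⟨f ∘ (Fintype.equivFin ι).symm, fun x hx => ?_⟩
  obtain ⟨s, ⟨i, rfl⟩, hxs⟩ := h hx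
  exact mem_iUnion.2 ⟨Fintype.equivFin ι i, by simpa using hxs⟩

theorem Cov.union {A B : Set ℝ} {δ : ℝ} {m n : ℕ}
    (hA : Cov A δ m) (hB : Cov B δ n) : Cov (A ∪ B) δ (m + n) := by
  obtain ⟨f, hf⟩ := hA
  obtain ⟨g, hg⟩ := hB
  refine ⟨fun i => Sum.elim f g (finSumFinEquiv.symm i), fun x hx => ?_⟩
  rcases hx with hx | hx
  · obtain ⟨s, ⟨i, rfl⟩, hxs⟩ := hf hx
    exact mem_iUnion.2 ⟨finSumFinEquiv (Sum.inl i), by simpa using hxs⟩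
  · obtain ⟨s, ⟨i, rfl⟩, hxs⟩ := hg hx
    exact mem_iUnion.2 ⟨finSumFinEquiv (Sum.inr i), by simpa using hxs⟩

theorem cov_biUnion {δ : ℝ} (E : ℕ → Set ℝ) (g : ℕ → ℕ) (s : Finset ℕ)
    (h : ∀ k ∈ s, Cov (E k) δ (g k)) :
    Cov (⋃ k ∈ s, E k) δ (∑ k ∈ s, g k) := by
  classical
  induction s using Finset.induction_on with
  | empty => exact ⟨fun i => 0, by simp⟩
  | @insert a s ha ih =>
    rw [Finset.sum_insert ha]
    have : (⋃ k ∈ insert a s, E k) = E a ∪ ⋃ k ∈ s, E k := by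
      simp [Set.biUnion_insert]
    rw [this]
    exact (h a (Finset.mem_insert_self a s)).union
      (ih fun k hk => h k (Finset.mem_insert_of_mem hk))

theorem cov_Icc (c δ : ℝ) : Cov (Set.Icc c (c + δ)) δ 1 :=
  ⟨fun _ => c, fun x hx => mem_iUnion.2 ⟨0, hx⟩⟩


theorem cantorLeft_eq_range (μ a b : ℝ) (m : ℕ) (w : Fin m → Bool) :
    cantorLeft μ a b m w = a + (b - a) * ∑ i ∈ Finset.range m,
      (if h : i < m then (if w ⟨i, h⟩ then (1 - μ) * μ ^ i else 0) else 0) := by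
  rw [cantorLeft, ← Fin.sum_univ_eq_sum_range
    (fun i => if h : i < m then (if w ⟨i, h⟩ then (1 - μ) * μ ^ i else 0) else 0) m]
  congr 1
  congr 1
  refine Finset.sum_congr rfl fun i _ => ?_
  rw [dif_pos i.isLt]

theorem cantorLeft_nest {μ : ℝ} (a b : ℝ) (hab : a ≤ b) (hμ0 : 0 ≤ μ) (hμ1 : μ < 1)
    {j m : ℕ} (hjm : j ≤ m) (w : Fin m → Bool) :
    cantorLeft μ a b j (fun i => w (Fin.castLE hjm i)) ≤ cantorLeft μ a b m w ∧
      cantorLeft μ a b m w + μ ^ m * (b - a)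
        ≤ cantorLeft μ a b j (fun i => w (Fin.castLE hjm i)) + μ ^ j * (b - a) := by
  set f : ℕ → ℝ :=
    fun i => if h : i < m then (if w ⟨i, h⟩ then (1 - μ) * μ ^ i else 0) else 0 with hf
  have hm : cantorLeft μ a b m w = a + (b - a) * ∑ i ∈ Finset.range m, f i :=
    cantorLeft_eq_range μ a b m w
  have hj : cantorLeft μ a b j (fun i => w (Fin.castLE hjm i))
      = a + (b - a) * ∑ i ∈ Finset.range j, f i := by
    rw [cantorLeft_eq_range]
    congr 1
    congr 1
    refine Finset.sum_congr rfl fun i hi => ?_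
    have hij : i < j := Finset.mem_range.1 hi
    rw [dif_pos hij, hf]
    simp only [dif_pos (lt_of_lt_of_le hij hjm)]
    rfl
  have hsplit : ∑ i ∈ Finset.range m, f i
      = ∑ i ∈ Finset.range j, f i + ∑ i ∈ Finset.Ico j m, f i := by
    exact (Finset.sum_range_add_sum_Ico f hjm).symm
  have h1μ : (0:ℝ) ≤ 1 - μ := by linarith
  have htail_nonneg : 0 ≤ ∑ i ∈ Finset.Ico j m, f i := by
    refine Finset.sum_nonneg fun i _ => ?_
    simp only [hf]
    split_ifs with h1 h2
    · positivity
    · exact le_refl 0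
    · exact le_refl 0
  have htail_le : ∑ i ∈ Finset.Ico j m, f i ≤ μ ^ j - μ ^ m := by
    have hle : ∑ i ∈ Finset.Ico j m, f i ≤ ∑ i ∈ Finset.Ico j m, (1 - μ) * μ ^ i := by
      refine Finset.sum_le_sum fun i _ => ?_
      simp only [hf]
      split_ifs with h1 h2
      · exact le_refl _
      · positivity
      · positivity
    have hgeom : ∑ i ∈ Finset.Ico j m, (1 - μ) * μ ^ i = μ ^ j - μ ^ m := by
      rw [← Finset.mul_sum, geom_sum_Ico' hμ1.ne hjm]
      have : (1:ℝ) - μ ≠ 0 := sub_ne_zero.2 hμ1.ne'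
      field_simp
    linarith [hle, hgeom.le, hgeom.ge]
  have hba : (0:ℝ) ≤ b - a := by linarith
  constructor
  · rw [hm, hj, hsplit]
    nlinarith [mul_nonneg hba htail_nonneg]
  · rw [hm, hj, hsplit]
    nlinarith [mul_le_mul_of_nonneg_left htail_le hba]



theorem cov_cantorEndpoints {μ a b δ : ℝ} (hab : a ≤ b) (hμ0 : 0 ≤ μ) (hμ1 : μ < 1)
    {j m : ℕ} (hjm : j ≤ m) (hδ : μ ^ j * (b - a) ≤ δ) :
    Cov (cantorEndpoints μ a b m) δ (2 ^ j) := by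
  have hcard : Fintype.card (Fin j → Bool) = 2 ^ j := by simp
  rw [← hcard]
  refine cov_of_fintype (Fin j → Bool) (fun w => cantorLeft μ a b j w) ?_
  rintro x ⟨w, hx⟩
  obtain ⟨h1, h2⟩ := cantorLeft_nest a b hab hμ0 hμ1 hjm w
  have hμm : 0 ≤ μ ^ m * (b - a) := by
    have : (0:ℝ) ≤ b - a := by linarith
    positivity
  refine mem_iUnion.2 ⟨fun i => w (Fin.castLE hjm i), ?_⟩
  rcases hx with rfl | rfl
  · exact ⟨h1, by linarith⟩
  · exact ⟨by linarith, by linarith⟩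

theorem cov_cantorEndpoints_pts {μ a b : ℝ} {δ : ℝ} (hδ : 0 ≤ δ) (m : ℕ) :
    Cov (cantorEndpoints μ a b m) δ (2 ^ m * 2) := by
  have hcard : Fintype.card ((Fin m → Bool) × Bool) = 2 ^ m * 2 := by simp
  rw [← hcard]
  refine cov_of_fintype _ (fun p =>
    if p.2 then cantorLeft μ a b m p.1 + μ ^ m * (b - a) else cantorLeft μ a b m p.1) ?_
  rintro x ⟨w, hx⟩
  rcases hx with rfl | rfl
  · exact mem_iUnion.2 ⟨(w, false), by simp; linarith⟩
  · exact mem_iUnion.2 ⟨(w, true), by simp; linarith⟩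

theorem cantorEndpoints_subset {μ a b : ℝ} (hab : a ≤ b) (hμ0 : 0 ≤ μ) (hμ1 : μ < 1)
    (m : ℕ) : cantorEndpoints μ a b m ⊆ Set.Icc a b := by
  rintro x ⟨w, hx⟩
  obtain ⟨h1, h2⟩ := cantorLeft_nest a b hab hμ0 hμ1 (Nat.zero_le m) w
  have h0 : cantorLeft μ a b 0 (fun i => w (Fin.castLE (Nat.zero_le m) i)) = a := by
    simp [cantorLeft]
  rw [h0] at h1 h2
  rw [pow_zero, one_mul] at h2
  have hμm : 0 ≤ μ ^ m * (b - a) := by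
    have : (0:ℝ) ≤ b - a := by linarith
    positivity
  rcases hx with rfl | rfl
  · exact ⟨h1, by linarith⟩
  · exact ⟨by linarith, by linarith⟩



theorem rpow_pow (s : ℝ) (n : ℕ) : ((2:ℝ) ^ s) ^ n = (2:ℝ) ^ (s * n) := by
  rw [← Real.rpow_natCast ((2:ℝ) ^ s) n, ← Real.rpow_mul (by norm_num : (0:ℝ) ≤ 2)]

theorem rpow_rpow (s t : ℝ) : ((2:ℝ) ^ s) ^ t = (2:ℝ) ^ (s * t) :=
  (Real.rpow_mul (by norm_num) s t).symm

theorem two_rpow_le {s t : ℝ} (h : s ≤ t) : (2:ℝ) ^ s ≤ (2:ℝ) ^ t :=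
  Real.rpow_le_rpow_of_exponent_le one_le_two h

theorem two_rpow_pos (s : ℝ) : (0:ℝ) < 2 ^ s := Real.rpow_pos_of_pos two_pos s

variable {β γ : ℝ}

theorem lamb_pos (β : ℝ) : 0 < lamb β := two_rpow_pos _

theorem lamb_lt_one (hβ0 : 0 < β) : lamb β < 1 := by
  have h : -(1/β) < 0 := by
    have : 0 < 1/β := by positivity
    linarith
  exact Real.rpow_lt_one_of_one_lt_of_neg one_lt_two h

theorem mug_pos (γ : ℝ) : 0 < mug γ := two_rpow_pos _

theorem mug_lt_one (hγ0 : 0 < γ) : mug γ < 1 := by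
  have h : -(1/γ) < 0 := by
    have : 0 < 1/γ := by positivity
    linarith
  exact Real.rpow_lt_one_of_one_lt_of_neg one_lt_two h

theorem theta_pos (hβ0 : 0 < β) (hβγ : β < γ) : 0 < 1 - β / γ := by
  have hγ0 : 0 < γ := hβ0.trans hβγ
  have : β / γ < 1 := (div_lt_one hγ0).2 hβγ
  linarith

theorem mGen_ge (hβ0 : 0 < β) (hβγ : β < γ) (k : ℕ) :
    (k : ℝ) / (1 - β / γ) ≤ (mGen β γ k : ℝ) := by
  have hθ := theta_pos hβ0 hβγ
  have hx : (0:ℝ) ≤ (k : ℝ) / (1 - β / γ) := by positivity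
  have hfl : (0:ℤ) ≤ ⌊(k : ℝ) / (1 - β / γ)⌋ := Int.floor_nonneg.2 hx
  have : ((mGen β γ k : ℕ) : ℝ) = 1 + ((⌊(k : ℝ) / (1 - β / γ)⌋ : ℤ) : ℝ) := by
    rw [mGen, Nat.cast_add, Nat.cast_one, ← Int.cast_natCast, Int.toNat_of_nonneg hfl]
  rw [this]
  have := Int.lt_floor_add_one ((k : ℝ) / (1 - β / γ))
  linarith

theorem mGen_le (hβ0 : 0 < β) (hβγ : β < γ) (k : ℕ) :
    (mGen β γ k : ℝ) ≤ 1 + (k : ℝ) / (1 - β / γ) := by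
  have hθ := theta_pos hβ0 hβγ
  have hx : (0:ℝ) ≤ (k : ℝ) / (1 - β / γ) := by positivity
  have hfl : (0:ℤ) ≤ ⌊(k : ℝ) / (1 - β / γ)⌋ := Int.floor_nonneg.2 hx
  have heq : ((mGen β γ k : ℕ) : ℝ) = 1 + ((⌊(k : ℝ) / (1 - β / γ)⌋ : ℤ) : ℝ) := by
    rw [mGen, Nat.cast_add, Nat.cast_one, ← Int.cast_natCast, Int.toNat_of_nonneg hfl]
  rw [heq]
  have := Int.floor_le ((k : ℝ) / (1 - β / γ))
  linarith

theorem delk_pos (β γ : ℝ) (n : ℕ) : 0 < delk β γ n := by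
  rw [delk]
  exact mul_pos (pow_pos (lamb_pos β) _) (pow_pos (mug_pos γ) _)

theorem delk_eq (β γ : ℝ) (n : ℕ) :
    delk β γ n = (2:ℝ) ^ (-(((n - 1 : ℕ) : ℝ) / β) - (mGen β γ n : ℝ) / γ) := by
  rw [delk, lamb, mug, rpow_pow, rpow_pow, ← Real.rpow_add two_pos]
  congr 1
  ring

theorem keyA (hβ0 : 0 < β) (hβγ : β < γ) {n : ℕ} {δ : ℝ}
    (hδ0 : 0 < δ) (h : δ < delk β γ n) :
    ((2:ℝ) ^ (1 / (1 - β / γ))) ^ n ≤ 2 * δ ^ (-β) := by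
  have hγ0 : 0 < γ := hβ0.trans hβγ
  have hθ := theta_pos hβ0 hβγ
  set c : ℝ := ((n - 1 : ℕ) : ℝ) with hcdef
  set m : ℝ := (mGen β γ n : ℝ) with hmdef
  have hc : (n : ℝ) - 1 ≤ c := by
    have hn : n ≤ n - 1 + 1 := by omega
    have : (n : ℝ) ≤ ((n - 1 + 1 : ℕ) : ℝ) := Nat.cast_le.2 hn
    push_cast at this
    linarith
  have hm : (n : ℝ) / (1 - β / γ) ≤ m := mGen_ge hβ0 hβγ n
  -- main exponent inequality
  have key : (1 / (1 - β / γ)) * n + (-(c / β) - m / γ) * β ≤ 1 := by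
    have e1' : (1 - β / γ) * ((n : ℝ) / (1 - β / γ)) = n := mul_div_cancel₀ _ hθ.ne'
    have e1 : (n : ℝ) / (1 - β / γ) - (β / γ) * ((n : ℝ) / (1 - β / γ)) = n := by
      linear_combination e1'
    have h2 : (β / γ) * ((n : ℝ) / (1 - β / γ)) ≤ (β / γ) * m :=
      mul_le_mul_of_nonneg_left hm (by positivity)
    have e2 : (-(c / β) - m / γ) * β = -c - (β / γ) * m := by
      field_simp
    rw [e2]
    have e3 : (1 / (1 - β / γ)) * (n:ℝ) = (n:ℝ) / (1 - β / γ) := by ring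
    rw [e3]
    linarith
  have hδβ : δ ^ β ≤ delk β γ n ^ β := Real.rpow_le_rpow hδ0.le h.le hβ0.le
  have hrw : delk β γ n ^ β = (2:ℝ) ^ ((-(c / β) - m / γ) * β) := by
    rw [delk_eq, rpow_rpow]
  have hmain : ((2:ℝ) ^ (1 / (1 - β / γ))) ^ n * δ ^ β ≤ 2 := by
    calc ((2:ℝ) ^ (1 / (1 - β / γ))) ^ n * δ ^ β
        ≤ ((2:ℝ) ^ (1 / (1 - β / γ))) ^ n * delk β γ n ^ β := by
          exact mul_le_mul_of_nonneg_left hδβ (by positivity)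
      _ = (2:ℝ) ^ ((1 / (1 - β / γ)) * n + (-(c / β) - m / γ) * β) := by
          rw [hrw, rpow_pow, ← Real.rpow_add two_pos]
      _ ≤ (2:ℝ) ^ (1:ℝ) := two_rpow_le key
      _ = 2 := Real.rpow_one 2
  have hpos : (0:ℝ) < δ ^ β := Real.rpow_pos_of_pos hδ0 β
  rw [Real.rpow_neg hδ0.le]
  calc ((2:ℝ) ^ (1 / (1 - β / γ))) ^ n ≤ 2 / δ ^ β := by
        rw [le_div_iff₀ hpos]; exact hmain
    _ = 2 * (δ ^ β)⁻¹ := by rw [div_eq_mul_inv]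

theorem keyB (hβ0 : 0 < β) (hβγ : β < γ) {k1 : ℕ} {δ : ℝ}
    (hδ0 : 0 < δ) (h : delk β γ k1 ≤ δ) :
    (lamb β ^ γ) ^ k1 * δ ^ (-γ) ≤ 2 * δ ^ (-β) := by
  have hγ0 : 0 < γ := hβ0.trans hβγ
  have hθ := theta_pos hβ0 hβγ
  set c : ℝ := ((k1 - 1 : ℕ) : ℝ) with hcdef
  set m : ℝ := (mGen β γ k1 : ℝ) with hmdef
  have hcle : c ≤ (k1 : ℝ) := Nat.cast_le.2 (Nat.sub_le k1 1)
  have hm : m ≤ 1 + (k1 : ℝ) / (1 - β / γ) := mGen_le hβ0 hβγ k1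
  have hq : lamb β ^ γ = (2:ℝ) ^ (-(1 / β) * γ) := by rw [lamb, rpow_rpow]
  -- exponent inequality : -(γ/β) k1 ≤ 1 + (-(c/β) - m/γ)(γ-β)
  have key : (-(1 / β) * γ) * k1 ≤ 1 + (-(c / β) - m / γ) * (γ - β) := by
    have hγβθ : (γ - β) / γ = 1 - β / γ := by
      rw [sub_div, div_self hγ0.ne']
    have e2 : ((γ - β) / γ) * ((k1 : ℝ) / (1 - β / γ)) = k1 := by
      rw [hγβθ]
      exact mul_div_cancel₀ _ hθ.ne' 
    have hγβγ : (γ - β) / γ ≤ 1 := by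
      rw [div_le_one hγ0]
      linarith
    have e3 : (-(c / β) - m / γ) * (γ - β) = -(((γ - β) / β) * c) - ((γ - β)/γ) * m := by
      field_simp
    have hγβpos : 0 < (γ - β) / β := by
      have : 0 < γ - β := by linarith
      positivity
    have h4 : ((γ - β) / β) * c ≤ ((γ - β) / β) * k1 :=
      mul_le_mul_of_nonneg_left hcle hγβpos.le
    have h5 : ((γ - β)/γ) * m ≤ ((γ - β)/γ) * (1 + (k1 : ℝ) / (1 - β / γ)) := by
      apply mul_le_mul_of_nonneg_left hm
      have : 0 < γ - β := by linarith
      positivity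
    have e4 : ((γ - β)/γ) * (1 + (k1 : ℝ) / (1 - β / γ)) = (γ - β)/γ + k1 := by
      rw [mul_add, e2, mul_one]
    have e5 : (-(1 / β) * γ) * (k1:ℝ) = -(((γ - β) / β) * k1) - k1 := by
      have hb : (γ - β) / β = γ / β - 1 := by
        rw [sub_div, div_self hβ0.ne']
      rw [hb]
      ring
    rw [e3, e5]
    rw [e4] at h5
    linarith
  -- q^{k1} ≤ 2 * δ^(γ - β)
  have h1 : (lamb β ^ γ) ^ k1 ≤ 2 * delk β γ k1 ^ (γ - β) := by
    have hrw : delk β γ k1 ^ (γ - β) = (2:ℝ) ^ ((-(c / β) - m / γ) * (γ - β)) := by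
      rw [delk_eq, rpow_rpow]
    rw [hq, rpow_pow, hrw]
    calc (2:ℝ) ^ ((-(1 / β) * γ) * k1) ≤ (2:ℝ) ^ (1 + (-(c / β) - m / γ) * (γ - β)) :=
          two_rpow_le key
      _ = 2 * (2:ℝ) ^ ((-(c / β) - m / γ) * (γ - β)) := by
          rw [Real.rpow_add two_pos, Real.rpow_one]
  have h2 : delk β γ k1 ^ (γ - β) ≤ δ ^ (γ - β) :=
    Real.rpow_le_rpow (delk_pos β γ k1).le h (by linarith)
  have h3 : (lamb β ^ γ) ^ k1 ≤ 2 * δ ^ (γ - β) := by linarith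
  have hδγ : (0:ℝ) < δ ^ (-γ) := Real.rpow_pos_of_pos hδ0 _
  calc (lamb β ^ γ) ^ k1 * δ ^ (-γ) ≤ (2 * δ ^ (γ - β)) * δ ^ (-γ) :=
        mul_le_mul_of_nonneg_right h3 hδγ.le
    _ = 2 * (δ ^ (γ - β) * δ ^ (-γ)) := by ring
    _ = 2 * δ ^ (-β) := by
        rw [← Real.rpow_add hδ0]
        congr 1
        ring



theorem midStep {β γ : ℝ} (hβ0 : 0 < β) (hβγ : β < γ) {δ D : ℝ} {k i : ℕ}
    (hδ0 : 0 < δ) (hD0 : 0 ≤ D) (hDk : D ≤ lamb β ^ k) (h : δ < mug γ ^ i * D) :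
    ((2:ℝ) ^ i : ℝ) ≤ (lamb β ^ γ) ^ k * δ ^ (-γ) := by
  have hγ0 : 0 < γ := hβ0.trans hβγ
  have hμi : mug γ ^ i = (2:ℝ) ^ (-(1/γ) * i) := by rw [mug, rpow_pow]
  have hq : (lamb β ^ γ) ^ k = (2:ℝ) ^ (-(1/β) * γ * k) := by
    rw [lamb, rpow_rpow, rpow_pow]
  have hδγ : δ ^ γ ≤ (mug γ ^ i * D) ^ γ := Real.rpow_le_rpow hδ0.le h.le hγ0.le
  have hmul : (mug γ ^ i * D) ^ γ = (mug γ ^ i) ^ γ * D ^ γ :=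
    Real.mul_rpow (pow_nonneg (mug_pos γ).le i) hD0
  have h2 : (mug γ ^ i) ^ γ = (2:ℝ) ^ (-(i:ℝ)) := by
    rw [hμi, rpow_rpow]
    congr 1
    field_simp
  have h3 : D ^ γ ≤ (lamb β ^ k) ^ γ := Real.rpow_le_rpow hD0 hDk hγ0.le
  have h4 : (lamb β ^ k) ^ γ = (lamb β ^ γ) ^ k := by
    rw [lamb, rpow_pow, rpow_rpow, rpow_rpow, rpow_pow]
    congr 1
    ring
  have h5 : δ ^ γ ≤ (2:ℝ) ^ (-(i:ℝ)) * (lamb β ^ γ) ^ k := by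
    calc δ ^ γ ≤ (mug γ ^ i) ^ γ * D ^ γ := by rw [← hmul]; exact hδγ
      _ ≤ (mug γ ^ i) ^ γ * (lamb β ^ k) ^ γ := by
          exact mul_le_mul_of_nonneg_left h3 (Real.rpow_nonneg (pow_nonneg (mug_pos γ).le i) γ)
      _ = (2:ℝ) ^ (-(i:ℝ)) * (lamb β ^ γ) ^ k := by rw [h2, h4]
  have h2i : ((2:ℝ) ^ i : ℝ) = (2:ℝ) ^ ((i:ℕ):ℝ) := (Real.rpow_natCast 2 i).symm
  have hδγpos : (0:ℝ) < δ ^ γ := Real.rpow_pos_of_pos hδ0 γ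
  have h6 : (2:ℝ) ^ ((i:ℕ):ℝ) * δ ^ γ ≤ (lamb β ^ γ) ^ k := by
    calc (2:ℝ) ^ ((i:ℕ):ℝ) * δ ^ γ
        ≤ (2:ℝ) ^ ((i:ℕ):ℝ) * ((2:ℝ) ^ (-(i:ℝ)) * (lamb β ^ γ) ^ k) :=
          mul_le_mul_of_nonneg_left h5 (two_rpow_pos _).le
      _ = ((2:ℝ) ^ ((i:ℕ):ℝ) * (2:ℝ) ^ (-(i:ℝ))) * (lamb β ^ γ) ^ k := by ring
      _ = (lamb β ^ γ) ^ k := by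
          rw [← Real.rpow_add two_pos, add_neg_cancel, Real.rpow_zero, one_mul]
  rw [h2i, Real.rpow_neg hδ0.le, ← div_eq_mul_inv, le_div_iff₀ hδγpos]
  exact h6

theorem one_le_mid {β γ : ℝ} (hβ0 : 0 < β) (hβγ : β < γ) {δ : ℝ} {k : ℕ}
    (hδ0 : 0 < δ) (h : δ < lamb β ^ k) : (1:ℝ) ≤ (lamb β ^ γ) ^ k * δ ^ (-γ) := by
  have h' : δ < mug γ ^ 0 * (lamb β ^ k) := by
    rw [pow_zero, one_mul]; exact h
  simpa using midStep hβ0 hβγ hδ0 (pow_nonneg (lamb_pos β).le k) le_rfl h' 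



end BlockAux
set_option maxHeartbeats 1600000 in
theorem blockSet_minkowski_upper (β γ : ℝ) (hβ0 : 0 < β) (hβγ : β < γ) (hγ1 : γ < 1) :
    (∃ C : ℝ, ∀ δ ∈ Set.Ioo (0:ℝ) 1,
      δ ^ β * (coverNum (blockSet β γ) δ : ℝ) ≤ C) ∧
    minkDim (blockSet β γ) ≤ β := by
  classical
  have hγ0 : 0 < γ := hβ0.trans hβγ
  have hθ : 0 < 1 - β / γ := BlockAux.theta_pos hβ0 hβγ
  set r : ℝ := (2:ℝ) ^ (1 / (1 - β / γ)) with hrdef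
  set q : ℝ := lamb β ^ γ with hqdef
  have hlam0 : 0 < lamb β := BlockAux.lamb_pos β
  have hlam1 : lamb β < 1 := BlockAux.lamb_lt_one hβ0
  have hμ0 : 0 < mug γ := BlockAux.mug_pos γ
  have hμ1 : mug γ < 1 := BlockAux.mug_lt_one hγ0
  have hr1 : 1 < r := by
    rw [hrdef]
    exact (Real.one_lt_rpow_iff_of_pos two_pos).2 (Or.inl ⟨one_lt_two, by positivity⟩)
  have hq0 : 0 < q := Real.rpow_pos_of_pos hlam0 γ
  have hq1 : q < 1 := Real.rpow_lt_one hlam0.le hlam1 hγ0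
  set C0 : ℝ := 8 * r / (r - 1) + 4 / (1 - q) + 1 with hC0def
  have hC0pos : 0 < C0 := by
    rw [hC0def]
    have t1 : 0 < 8 * r / (r - 1) := div_pos (by linarith) (by linarith)
    have t2 : 0 < 4 / (1 - q) := div_pos (by norm_num) (by linarith)
    linarith
  -- the main covering estimate
  have key : ∀ δ ∈ Set.Ioo (0:ℝ) 1,
      (coverNum (blockSet β γ) δ : ℝ) ≤ C0 * δ ^ (-β) := by
    rintro δ ⟨hδ0, hδ1⟩
    have hpowlt : ∀ k : ℕ, lamb β ^ (k+1) < lamb β ^ k := fun k => by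
      rw [pow_succ]
      nlinarith [pow_pos hlam0 k]
    have hab : ∀ k : ℕ, 1 + lamb β ^ (k+1) ≤ 1 + lamb β ^ k := fun k => by
      have := hpowlt k
      linarith
    have hba_pos : ∀ k : ℕ, 0 < (1 + lamb β ^ k) - (1 + lamb β ^ (k+1)) := fun k => by
      have := hpowlt k
      linarith
    have hba_le : ∀ k : ℕ, (1 + lamb β ^ k) - (1 + lamb β ^ (k+1)) ≤ lamb β ^ k := fun k => by
      have : 0 < lamb β ^ (k+1) := pow_pos hlam0 _
      linarith
    -- K : first scale with λ^K ≤ δ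
    have hKex : ∃ n : ℕ, lamb β ^ n ≤ δ := by
      obtain ⟨n, hn⟩ := exists_pow_lt_of_lt_one hδ0 hlam1
      exact ⟨n, hn.le⟩
    set K := Nat.find hKex with hKdef
    have hKspec : lamb β ^ K ≤ δ := Nat.find_spec hKex
    have hKmin : ∀ k, k < K → δ < lamb β ^ k := fun k hk =>
      lt_of_not_ge (Nat.find_min hKex hk)
    -- k1 : first block index with δ_k ≤ δ
    have hk1ex : ∃ k : ℕ, delk β γ k ≤ δ := by
      refine ⟨K + 1, ?_⟩
      rw [delk, Nat.add_sub_cancel]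
      calc lamb β ^ K * mug γ ^ mGen β γ (K+1)
          ≤ lamb β ^ K * 1 :=
            mul_le_mul_of_nonneg_left (pow_le_one₀ hμ0.le hμ1.le) (pow_pos hlam0 K).le
        _ = lamb β ^ K := mul_one _
        _ ≤ δ := hKspec
    set k1 := Nat.find hk1ex with hk1def
    have hk1spec : delk β γ k1 ≤ δ := Nat.find_spec hk1ex
    have hk1min : ∀ k, k < k1 → δ < delk β γ k := fun k hk =>
      lt_of_not_ge (Nat.find_min hk1ex hk)
    -- minimal generation covered by δ inside block k
    have hjkex : ∀ k : ℕ,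
        ∃ j : ℕ, mug γ ^ j * ((1 + lamb β ^ k) - (1 + lamb β ^ (k+1))) ≤ δ := fun k => by
      obtain ⟨j, hj⟩ := exists_pow_lt_of_lt_one (div_pos hδ0 (hba_pos k)) hμ1
      refine ⟨j, ?_⟩
      rw [← le_div_iff₀ (hba_pos k)]
      exact hj.le
    set g : ℕ → ℕ := fun k => if Nat.find (hjkex k) ≤ mGen β γ k
      then 2 ^ Nat.find (hjkex k) else 2 ^ mGen β γ k * 2 with hgdef
    -- covers of the blocks
    have covEk : ∀ k : ℕ, BlockAux.Cov (Ek β γ k) δ (g k) := fun k => by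
      rw [Ek]
      by_cases h : Nat.find (hjkex k) ≤ mGen β γ k
      · rw [hgdef]
        simp only [if_pos h]
        exact BlockAux.cov_cantorEndpoints (hab k) hμ0.le hμ1 h (Nat.find_spec (hjkex k))
      · rw [hgdef]
        simp only [if_neg h]
        exact BlockAux.cov_cantorEndpoints_pts hδ0.le _
    -- crude bound, used for small k
    have gfine : ∀ k : ℕ, (g k : ℝ) ≤ 4 * r ^ k := fun k => by
      have h1 : g k ≤ 2 ^ mGen β γ k * 2 := by
        simp only [hgdef]
        split_ifs with h
        · calc 2 ^ Nat.find (hjkex k) ≤ 2 ^ mGen β γ k := Nat.pow_le_pow_right (by norm_num) h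
            _ ≤ 2 ^ mGen β γ k * 2 := Nat.le_mul_of_pos_right _ (by norm_num)
        · exact le_refl _
      calc (g k : ℝ) ≤ ((2 ^ mGen β γ k * 2 : ℕ) : ℝ) := Nat.cast_le.2 h1
        _ = 2 * (2:ℝ) ^ ((mGen β γ k : ℕ) : ℝ) := by
            push_cast
            rw [Real.rpow_natCast]
            ring
        _ ≤ 2 * (2:ℝ) ^ (1 + (k:ℝ) / (1 - β / γ)) :=
            mul_le_mul_of_nonneg_left (BlockAux.two_rpow_le (BlockAux.mGen_le hβ0 hβγ k))
              (by norm_num)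
        _ = 4 * (2:ℝ) ^ ((1 / (1 - β / γ)) * (k:ℕ)) := by
            rw [Real.rpow_add two_pos, Real.rpow_one,
              show (k:ℝ) / (1 - β / γ) = (1 / (1 - β / γ)) * ((k:ℕ):ℝ) by ring]
            ring
        _ = 4 * r ^ k := by rw [hrdef, BlockAux.rpow_pow]
    -- refined bound, used for k < K
    have gmid : ∀ k : ℕ, k < K → (g k : ℝ) ≤ 2 * (q ^ k * δ ^ (-γ)) := fun k hkK => by
      have hD0 : (0:ℝ) ≤ (1 + lamb β ^ k) - (1 + lamb β ^ (k+1)) := (hba_pos k).le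
      have hDk : (1 + lamb β ^ k) - (1 + lamb β ^ (k+1)) ≤ lamb β ^ k := hba_le k
      simp only [hgdef]
      split_ifs with h
      · rcases Nat.eq_zero_or_pos (Nat.find (hjkex k)) with h0 | hpos
        · rw [h0]
          have h1 := BlockAux.one_le_mid hβ0 hβγ hδ0 (hKmin k hkK)
          rw [hqdef]
          push_cast
          nlinarith [h1]
        · have hj : ¬ (mug γ ^ (Nat.find (hjkex k) - 1) *
              ((1 + lamb β ^ k) - (1 + lamb β ^ (k+1))) ≤ δ) :=
            Nat.find_min (hjkex k) (by omega)
          have hmid := BlockAux.midStep hβ0 hβγ hδ0 hD0 hDk (lt_of_not_ge hj)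
          have hjj : Nat.find (hjkex k) = (Nat.find (hjkex k) - 1) + 1 := by omega
          rw [hjj]
          rw [hqdef]
          push_cast [pow_succ]
          rw [mul_comm]; exact mul_le_mul_of_nonneg_left hmid (by norm_num)
      · have hj : ¬ (mug γ ^ mGen β γ k *
            ((1 + lamb β ^ k) - (1 + lamb β ^ (k+1))) ≤ δ) :=
          Nat.find_min (hjkex k) (by omega)
        have hmid := BlockAux.midStep hβ0 hβγ hδ0 hD0 hDk (lt_of_not_ge hj)
        rw [hqdef]
        push_cast
        nlinarith [hmid]
    -- blocks beyond K sit in a single interval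
    have htail : ∀ k : ℕ, K ≤ k → Ek β γ k ⊆ Set.Icc 1 (1 + δ) := fun k hk => by
      rw [Ek]
      intro x hx
      obtain ⟨hx1, hx2⟩ := BlockAux.cantorEndpoints_subset (hab k) hμ0.le hμ1 _ hx
      constructor
      · have : 0 < lamb β ^ (k+1) := pow_pos hlam0 _
        linarith
      · have h1 : lamb β ^ k ≤ lamb β ^ K := pow_le_pow_of_le_one hlam0.le hlam1.le hk
        linarith
    set L := max k1 K with hLdef
    have hsub : blockSet β γ ⊆ (⋃ k ∈ Finset.Ico 1 L, Ek β γ k) ∪ Set.Icc 1 (1 + δ) := by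
      rw [blockSet]
      intro x hx
      simp only [Set.mem_iUnion, Set.mem_setOf_eq] at hx
      obtain ⟨k, hk1le, hx⟩ := hx
      by_cases hkL : k < L
      · exact Or.inl (Set.mem_biUnion (Finset.mem_Ico.2 ⟨hk1le, hkL⟩) hx)
      · exact Or.inr (htail k (le_trans (le_max_right _ _) (not_lt.1 hkL)) hx)
    have covAll : BlockAux.Cov (blockSet β γ) δ ((∑ k ∈ Finset.Ico 1 L, g k) + 1) :=
      BlockAux.Cov.mono hsub
        ((BlockAux.cov_biUnion (Ek β γ) g _ (fun k _ => covEk k)).union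
          (BlockAux.cov_Icc 1 δ))
    have hcov : (coverNum (blockSet β γ) δ : ℝ) ≤ (∑ k ∈ Finset.Ico 1 L, (g k : ℝ)) + 1 := by
      have h := BlockAux.coverNum_le_of_cov covAll
      calc (coverNum (blockSet β γ) δ : ℝ)
          ≤ (((∑ k ∈ Finset.Ico 1 L, g k) + 1 : ℕ) : ℝ) := Nat.cast_le.2 h
        _ = (∑ k ∈ Finset.Ico 1 L, (g k : ℝ)) + 1 := by push_cast; ring
    -- split the sum
    have hterm : ∀ k ∈ Finset.Ico 1 L, (g k : ℝ) ≤
        (if k < k1 then 4 * r ^ k else 2 * (q ^ k * δ ^ (-γ))) := by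
      intro k hk
      obtain ⟨hk1', hkL⟩ := Finset.mem_Ico.1 hk
      split_ifs with h
      · exact gfine k
      · have hkK : k < K := by
          rcases lt_or_ge k K with h' | h'
          · exact h'
          · exact absurd (max_le (not_lt.1 h) h') (not_le.2 hkL)
        exact gmid k hkK
    have hsum1 : ∑ k ∈ Finset.Ico 1 L, (g k : ℝ)
        ≤ ∑ k ∈ Finset.Ico 1 L, (if k < k1 then 4 * r ^ k else 2 * (q ^ k * δ ^ (-γ))) :=
      Finset.sum_le_sum hterm
    have hsum2 : ∑ k ∈ Finset.Ico 1 L, (if k < k1 then 4 * r ^ k else 2 * (q ^ k * δ ^ (-γ)))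
        = (∑ k ∈ (Finset.Ico 1 L).filter (fun k => k < k1), 4 * r ^ k)
          + ∑ k ∈ (Finset.Ico 1 L).filter (fun k => ¬ k < k1), 2 * (q ^ k * δ ^ (-γ)) :=
      Finset.sum_ite _ _
    have hr0 : (0:ℝ) ≤ r := by linarith
    have hfil1 : ∑ k ∈ (Finset.Ico 1 L).filter (fun k => k < k1), 4 * r ^ k
        ≤ ∑ k ∈ Finset.Ico 1 k1, 4 * r ^ k := by
      refine Finset.sum_le_sum_of_subset_of_nonneg ?_ (fun k _ _ =>
        mul_nonneg (by norm_num) (pow_nonneg hr0 k))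
      intro k hk
      simp only [Finset.mem_filter, Finset.mem_Ico] at hk ⊢
      omega
    have hfil2 : ∑ k ∈ (Finset.Ico 1 L).filter (fun k => ¬ k < k1), 2 * (q ^ k * δ ^ (-γ))
        ≤ ∑ k ∈ Finset.Ico k1 L, 2 * (q ^ k * δ ^ (-γ)) := by
      refine Finset.sum_le_sum_of_subset_of_nonneg ?_ (fun k _ _ => by
        have h1 : (0:ℝ) ≤ q ^ k := pow_nonneg hq0.le k
        have h2 : (0:ℝ) ≤ δ ^ (-γ) := (Real.rpow_pos_of_pos hδ0 _).le
        positivity)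
      intro k hk
      simp only [Finset.mem_filter, Finset.mem_Ico] at hk ⊢
      omega
    have hrm1 : (0:ℝ) < r - 1 := by linarith
    -- geometric bound for the fine range
    have hfineSum : ∑ k ∈ Finset.Ico 1 k1, 4 * r ^ k ≤ (8 * r / (r - 1)) * δ ^ (-β) := by
      rcases Nat.eq_zero_or_pos k1 with h0 | hpos
      · rw [h0]
        simp only [Finset.Ico_eq_empty (by omega : ¬ (1:ℕ) < 0), Finset.sum_empty]
        have : (0:ℝ) ≤ δ ^ (-β) := (Real.rpow_pos_of_pos hδ0 _).le
        positivity
      · have hA := BlockAux.keyA hβ0 hβγ hδ0 (hk1min (k1 - 1) (by omega))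
        rw [← hrdef] at hA
        have hsubIco : Finset.Ico 1 k1 ⊆ Finset.range k1 := by
          intro k hk
          simp only [Finset.mem_Ico, Finset.mem_range] at hk ⊢
          omega
        have t1 : ∑ k ∈ Finset.Ico 1 k1, r ^ k ≤ ∑ k ∈ Finset.range k1, r ^ k :=
          Finset.sum_le_sum_of_subset_of_nonneg hsubIco (fun k _ _ => pow_nonneg hr0 k)
        have t2 : ∑ k ∈ Finset.range k1, r ^ k = (r ^ k1 - 1) / (r - 1) :=
          geom_sum_eq hr1.ne' k1
        have hsplitp : r ^ k1 = r * r ^ (k1 - 1) := by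
          conv_lhs => rw [show k1 = (k1 - 1) + 1 by omega]
          rw [pow_succ]
          ring
        have t3 : r * r ^ (k1 - 1) ≤ r * (2 * δ ^ (-β)) :=
          mul_le_mul_of_nonneg_left hA hr0
        calc ∑ k ∈ Finset.Ico 1 k1, 4 * r ^ k
            = 4 * ∑ k ∈ Finset.Ico 1 k1, r ^ k := by rw [Finset.mul_sum]
          _ ≤ 4 * ((r ^ k1 - 1) / (r - 1)) := by
              rw [← t2]
              exact mul_le_mul_of_nonneg_left t1 (by norm_num)
          _ = 4 * (r ^ k1 - 1) / (r - 1) := by ring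
          _ ≤ 4 * (r * (2 * δ ^ (-β))) / (r - 1) := by
              apply (div_le_div_iff_of_pos_right hrm1).2
              linarith [t3, hsplitp]
          _ = (8 * r / (r - 1)) * δ ^ (-β) := by ring
    -- geometric bound for the middle range
    have h1q : (0:ℝ) < 1 - q := by linarith
    have hmidSum : ∑ k ∈ Finset.Ico k1 L, 2 * (q ^ k * δ ^ (-γ))
        ≤ (4 / (1 - q)) * δ ^ (-β) := by
      have hgeo : ∑ k ∈ Finset.Ico k1 L, q ^ k ≤ q ^ k1 * (1 - q)⁻¹ := by
        rcases le_or_gt k1 L with hkL | hkL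
        · rw [Finset.sum_Ico_eq_sum_range]
          have e : ∀ i ∈ Finset.range (L - k1), q ^ (k1 + i) = q ^ k1 * q ^ i :=
            fun i _ => pow_add q k1 i
          rw [Finset.sum_congr rfl e, ← Finset.mul_sum]
          refine mul_le_mul_of_nonneg_left ?_ (pow_nonneg hq0.le k1)
          exact sum_le_hasSum _ (fun i _ => pow_nonneg hq0.le i)
            (hasSum_geometric_of_lt_one hq0.le hq1)
        · rw [Finset.Ico_eq_empty (by omega)]
          simp only [Finset.sum_empty]
          positivity
      have hB := BlockAux.keyB hβ0 hβγ hδ0 hk1spec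
      rw [← hqdef] at hB
      have hδγ : (0:ℝ) ≤ δ ^ (-γ) := (Real.rpow_pos_of_pos hδ0 _).le
      have e : ∑ k ∈ Finset.Ico k1 L, 2 * (q ^ k * δ ^ (-γ))
          = (∑ k ∈ Finset.Ico k1 L, q ^ k) * (2 * δ ^ (-γ)) := by
        rw [Finset.sum_mul]
        exact Finset.sum_congr rfl fun k _ => by ring
      rw [e]
      calc (∑ k ∈ Finset.Ico k1 L, q ^ k) * (2 * δ ^ (-γ))
          ≤ (q ^ k1 * (1 - q)⁻¹) * (2 * δ ^ (-γ)) := by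
            refine mul_le_mul_of_nonneg_right hgeo ?_
            positivity
        _ = (2 * (1 - q)⁻¹) * (q ^ k1 * δ ^ (-γ)) := by ring
        _ ≤ (2 * (1 - q)⁻¹) * (2 * δ ^ (-β)) := by
            refine mul_le_mul_of_nonneg_left hB ?_
            positivity
        _ = (4 / (1 - q)) * δ ^ (-β) := by
            field_simp
            ring
    -- put everything together
    have hone : (1:ℝ) ≤ δ ^ (-β) := by
      have h1 : δ ^ β ≤ 1 := Real.rpow_le_one hδ0.le hδ1.le hβ0.le
      have h2 : (0:ℝ) < δ ^ β := Real.rpow_pos_of_pos hδ0 β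
      rw [Real.rpow_neg hδ0.le]
      exact (one_le_inv₀ h2).2 h1
    have efin : C0 * δ ^ (-β)
        = (8 * r / (r - 1)) * δ ^ (-β) + (4 / (1 - q)) * δ ^ (-β) + δ ^ (-β) := by
      rw [hC0def]
      ring
    calc (coverNum (blockSet β γ) δ : ℝ)
        ≤ (∑ k ∈ Finset.Ico 1 L, (g k : ℝ)) + 1 := hcov
      _ ≤ ((∑ k ∈ (Finset.Ico 1 L).filter (fun k => k < k1), 4 * r ^ k)
            + ∑ k ∈ (Finset.Ico 1 L).filter (fun k => ¬ k < k1), 2 * (q ^ k * δ ^ (-γ))) + 1 := by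
          rw [← hsum2]
          linarith [hsum1]
      _ ≤ ((8 * r / (r - 1)) * δ ^ (-β) + (4 / (1 - q)) * δ ^ (-β)) + 1 := by
          linarith [hfil1, hfil2, hfineSum, hmidSum]
      _ ≤ C0 * δ ^ (-β) := by
          rw [efin]
          linarith [hone]
  constructor
  · refine ⟨C0, fun δ hδ => ?_⟩
    obtain ⟨hδ0, hδ1⟩ := hδ
    have hk := key δ ⟨hδ0, hδ1⟩
    have hp : (0:ℝ) < δ ^ β := Real.rpow_pos_of_pos hδ0 β
    calc δ ^ β * (coverNum (blockSet β γ) δ : ℝ)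
        ≤ δ ^ β * (C0 * δ ^ (-β)) := mul_le_mul_of_nonneg_left hk hp.le
      _ = C0 * (δ ^ β * δ ^ (-β)) := by ring
      _ = C0 := by
          rw [← Real.rpow_add hδ0, add_neg_cancel, Real.rpow_zero, mul_one]
  · apply csInf_le
    · exact ⟨0, fun x hx => hx.1⟩
    · refine ⟨hβ0.le, fun ε hε => ⟨max C0 1, lt_of_lt_of_le one_pos (le_max_right _ _),
        fun δ hδ => ?_⟩⟩
      obtain ⟨hδ0, hδ1⟩ := hδ
      have h1 := key δ ⟨hδ0, hδ1⟩
      have h2 : δ ^ (-β) ≤ δ ^ (-(β + ε)) :=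
        Real.rpow_le_rpow_of_exponent_ge hδ0 hδ1.le (by linarith)
      have h3 : (0:ℝ) ≤ δ ^ (-β) := (Real.rpow_pos_of_pos hδ0 _).le
      calc (coverNum (blockSet β γ) δ : ℝ) ≤ C0 * δ ^ (-β) := h1
        _ ≤ (max C0 1) * δ ^ (-β) :=
            mul_le_mul_of_nonneg_right (le_max_left _ _) h3
        _ ≤ (max C0 1) * δ ^ (-(β + ε)) :=
            mul_le_mul_of_nonneg_left h2 (le_trans zero_le_one (le_max_right _ _))
end
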